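/- arXiv:1401.7369 — 7 statements merged into one kernel-verified Lean document; each statement's English description precedes it below -/
import Mathlib

section
/- If a side-information digraph G has exactly 5 vertices and mais(G) = 2, then the induced subgraph on any four vertices of G contains an edge, i.e., contains a pair of vertices i, j with both arcs i→j and j→i present. -/
/-- `ε` is a (zero-error) index code for the side-information digraph `G` on `Fin n`:
each receiver `i` can decode `x i` from the codeword and its side information
`{x j : G i j}`. Messages and code symbols are bits, modeled as `ZMod 2`. -/
def IsIndexCode {n ℓ : ℕ} (G : Fin n → Fin n → Prop)
    (ε : (Fin n → ZMod 2) → (Fin ℓ → ZMod 2)) : Prop :=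
  ∀ i : Fin n, ∃ δ : (Fin ℓ → ZMod 2) → ({j : Fin n // G i j} → ZMod 2) → ZMod 2,
    ∀ x : Fin n → ZMod 2, δ (ε x) (fun j => x j.1) = x i

/-- The optimal index codelength `ℓ*(G)`. -/
noncomputable def optLen {n : ℕ} (G : Fin n → Fin n → Prop) : ℕ :=
  sInf {ℓ : ℕ | ∃ ε : (Fin n → ZMod 2) → (Fin ℓ → ZMod 2), IsIndexCode G ε}

/-- The subgraph of `G` induced on the vertex set `S` has no directed cycle. -/
def AcyclicOn {n : ℕ} (G : Fin n → Fin n → Prop) (S : Finset (Fin n)) : Prop :=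
  ∀ i : Fin n, ¬ Relation.TransGen (fun a b => G a b ∧ a ∈ S ∧ b ∈ S) i i

/-- `mais G`: the order of a maximum acyclic induced subgraph of `G`. -/
noncomputable def mais {n : ℕ} (G : Fin n → Fin n → Prop) : ℕ :=
  sSup {k : ℕ | ∃ S : Finset (Fin n), S.card = k ∧ AcyclicOn G S}

/-- `minrank G`: the minimum rank over `GF(2)` of a matrix fitting `G`
(ones on the diagonal, zero at off-diagonal non-arcs). -/
noncomputable def minrank {n : ℕ} (G : Fin n → Fin n → Prop) : ℕ :=
  sInf {r : ℕ | ∃ M : Matrix (Fin n) (Fin n) (ZMod 2),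
    (∀ i, M i i = 1) ∧ (∀ i j, i ≠ j → ¬ G i j → M i j = 0) ∧ M.rank = r}

/-- `G` contains an undirected cycle of length `k` (`k ≥ 3`): `k` distinct
vertices, cyclically arranged, with consecutive ones joined by edges
(arcs in both directions). -/
def HasUndirCycleLen {n : ℕ} (G : Fin n → Fin n → Prop) (k : ℕ) : Prop :=
  3 ≤ k ∧ ∃ v : ZMod k → Fin n, Function.Injective v ∧
    ∀ t : ZMod k, G (v t) (v (t + 1)) ∧ G (v (t + 1)) (v t)

/-- The set of edges of `G`, each edge `i - j` (both arcs present) recorded as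
the unordered pair `{i, j}`. -/
def edgeSet {n : ℕ} (G : Fin n → Fin n → Prop) : Set (Finset (Fin n)) :=
  {e | ∃ i j : Fin n, i ≠ j ∧ G i j ∧ G j i ∧ e = ({i, j} : Finset (Fin n))}

/-!
If four vertices of a loopless digraph span no digon, they span at most six arcs, so one of
them, `v`, receives at most one of these arcs. Two further vertices `u`, `w` of the set then send
no arc to `v`, and `{v, u, w}` is acyclic: `v` is a source in it and `u`, `w` do not form a digon.
Hence `mais G ≥ 3`.
-/

open Finset

section InDegree

variable {α : Type*} [DecidableEq α] (r : α → α → Prop) [DecidableRel r]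

lemma card_bipartiteBelow_add_card_bipartiteAbove_le (hirrefl : ∀ a, ¬ r a a)
    {s : Finset α} (hasymm : ∀ a ∈ s, ∀ b ∈ s, r a b → ¬ r b a) {v : α} (hv : v ∈ s) :
    #(s.bipartiteBelow r v) + #(s.bipartiteAbove r v) ≤ #s - 1 := by
  rw [← card_union_of_disjoint, ← card_erase_of_mem hv]
  · refine card_le_card fun u hu => ?_
    simp only [mem_union, bipartiteBelow, bipartiteAbove, mem_filter] at hu
    rcases hu with ⟨hu, huv⟩ | ⟨hu, hvu⟩
    · exact mem_erase.2 ⟨fun h => hirrefl v (h ▸ huv), hu⟩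
    · exact mem_erase.2 ⟨fun h => hirrefl v (h ▸ hvu), hu⟩
  · simp only [disjoint_left, bipartiteBelow, bipartiteAbove, mem_filter]
    exact fun {u} ⟨hu, huv⟩ ⟨_, hvu⟩ => hasymm u hu v hv huv hvu

lemma exists_two_mul_card_bipartiteBelow_le (hirrefl : ∀ a, ¬ r a a)
    {s : Finset α} (hs : s.Nonempty) (hasymm : ∀ a ∈ s, ∀ b ∈ s, r a b → ¬ r b a) :
    ∃ v ∈ s, 2 * #(s.bipartiteBelow r v) ≤ #s - 1 := by
  refine exists_le_of_sum_le hs ?_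
  calc ∑ v ∈ s, 2 * #(s.bipartiteBelow r v)
      = ∑ v ∈ s, (#(s.bipartiteBelow r v) + #(s.bipartiteAbove r v)) := by
        rw [sum_add_distrib, sum_card_bipartiteAbove_eq_sum_card_bipartiteBelow, ← two_mul,
          mul_sum]
    _ ≤ ∑ _v ∈ s, (#s - 1) :=
        sum_le_sum fun v hv => card_bipartiteBelow_add_card_bipartiteAbove_le r hirrefl hasymm hv

end InDegree

section Acyclic

variable {n : ℕ} {G : Fin n → Fin n → Prop}

lemma acyclicOn_empty : AcyclicOn G ∅ :=
  fun _ h => by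
    obtain ⟨_, ⟨_, h, _⟩, _⟩ := Relation.TransGen.head'_iff.1 h
    exact notMem_empty _ h

lemma AcyclicOn.insert_of_source {S : Finset (Fin n)} {v : Fin n} (hS : AcyclicOn G S)
    (hv : ∀ u ∈ insert v S, ¬ G u v) : AcyclicOn G (insert v S) := by
  have target_mem : ∀ a b, G a b → a ∈ insert v S → b ∈ insert v S → b ∈ S := by
    intro a b hab ha hb
    rcases mem_insert.1 hb with rfl | hb
    · exact absurd hab (hv a ha)
    · exact hb
  have walk_in_S : ∀ a b,
      Relation.TransGen (fun a b => G a b ∧ a ∈ insert v S ∧ b ∈ insert v S) a b →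
      b ∈ S ∧ (a ∈ S → Relation.TransGen (fun a b => G a b ∧ a ∈ S ∧ b ∈ S) a b) := by
    intro a b hab
    induction hab with
    | single h =>
      have hb := target_mem _ _ h.1 h.2.1 h.2.2
      exact ⟨hb, fun ha => .single ⟨h.1, ha, hb⟩⟩
    | tail _ h ih =>
      have hc := target_mem _ _ h.1 h.2.1 h.2.2
      exact ⟨hc, fun ha => (ih.2 ha).tail ⟨h.1, ih.1, hc⟩⟩
  intro i hi
  obtain ⟨hiS, hcycle⟩ := walk_in_S i i hi
  exact hS i (hcycle hiS)

lemma acyclicOn_triple_of_source (hG : ∀ i, ¬ G i i) {v u w : Fin n}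
    (huw : ¬ (G u w ∧ G w u)) (hu : ¬ G u v) (hw : ¬ G w v) :
    AcyclicOn G {v, u, w} := by
  wlog hwu : ¬ G w u generalizing u w
  · rw [pair_comm]
    exact this (fun h => huw h.symm) hw hu fun h => huw ⟨h, not_not.1 hwu⟩
  have h_w : AcyclicOn G {w} := by
    simpa using acyclicOn_empty.insert_of_source (v := w) (by simpa using hG w)
  refine (h_w.insert_of_source ?_).insert_of_source ?_
  · simpa [hG u] using hwu
  · simpa [hG v] using ⟨hu, hw⟩

lemma card_le_mais {S : Finset (Fin n)} (hS : AcyclicOn G S) : #S ≤ mais G := by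
  refine le_csSup ⟨n, ?_⟩ ⟨S, rfl, hS⟩
  rintro k ⟨T, rfl, -⟩
  simpa using card_le_univ T

lemma exists_acyclicOn_card_three (hG : ∀ i, ¬ G i i) {S : Finset (Fin n)} (hS : #S = 4)
    (hasymm : ∀ i ∈ S, ∀ j ∈ S, G i j → ¬ G j i) :
    ∃ T : Finset (Fin n), #T = 3 ∧ AcyclicOn G T := by
  classical
  obtain ⟨v, hvS, hv⟩ := exists_two_mul_card_bipartiteBelow_le G hG
    (card_pos.1 (by omega)) hasymm
  have hN : 1 < #((S.erase v).filter (fun u => ¬ G u v)) := by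
    have h := card_filter_add_card_filter_not (s := S.erase v) (fun u => G u v)
    have hle : #((S.erase v).filter (fun u => G u v)) ≤ #(S.bipartiteBelow G v) :=
      card_le_card (filter_subset_filter _ (erase_subset v S))
    rw [card_erase_of_mem hvS] at h
    omega
  obtain ⟨u, hu, w, hw, huw⟩ := one_lt_card.1 hN
  simp only [mem_filter, mem_erase] at hu hw
  refine ⟨{v, u, w}, ?_, acyclicOn_triple_of_source hG
    (fun h => hasymm u hu.1.2 w hw.1.2 h.1 h.2) hu.2 hw.2⟩
  rw [card_insert_of_notMem (by simp [Ne.symm hu.1.1, Ne.symm hw.1.1]),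
    card_pair huw]

end Acyclic

/-- If `G` has exactly 5 vertices and `mais G = 2`, then the induced subgraph
on any four vertices contains an edge (a pair with arcs in both directions). -/
theorem stmt4 (G : Fin 5 → Fin 5 → Prop) (hG : ∀ i, ¬ G i i) (hm : mais G = 2) :
    ∀ S : Finset (Fin 5), S.card = 4 →
      ∃ i ∈ S, ∃ j ∈ S, i ≠ j ∧ G i j ∧ G j i := by
  intro S hS
  by_contra! hno_edge
  have hasymm : ∀ i ∈ S, ∀ j ∈ S, G i j → ¬ G j i := fun i hi j hj hij =>
    hno_edge i hi j hj (fun h => hG i (h ▸ hij)) hij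
  obtain ⟨T, hT, hacyc⟩ := exists_acyclicOn_card_three hG hS hasymm
  have := card_le_mais hacyc
  omega
end

section
/- For every side-information digraph G, the optimal index codelength is at least the order of a maximum acyclic induced subgraph: mais(G) ≤ ℓ*(G). -/
lemma key_mais {n ℓ : ℕ} (G : Fin n → Fin n → Prop) (S : Finset (Fin n))
    (hS : AcyclicOn G S) (ε : (Fin n → ZMod 2) → (Fin ℓ → ZMod 2))
    (hε : IsIndexCode G ε) : S.card ≤ ℓ := by
  classical
  set R : Fin n → Fin n → Prop := fun a b => G b a ∧ b ∈ S ∧ a ∈ S with hR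
  have hirr : ∀ i, ¬ Relation.TransGen R i i := by
    intro i h
    exact hS i ((Relation.transGen_swap
      (r := fun a b => G a b ∧ a ∈ S ∧ b ∈ S)).mp h)
  have hwf : WellFounded R := by
    have hT : WellFounded (Relation.TransGen R) := by
      have : IsIrrefl (Fin n) (Relation.TransGen R) := ⟨hirr⟩
      exact Finite.wellFounded_of_trans_of_irrefl _
    exact Subrelation.wf (fun h => Relation.TransGen.single h) hT
  let ext : ({x // x ∈ S} → ZMod 2) → (Fin n → ZMod 2) := fun u j =>
    if h : j ∈ S then u ⟨j, h⟩ else 0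
  have hinj : Function.Injective (fun u => ε (ext u)) := by
    intro u v huv
    simp only at huv
    have keyv : ∀ i, ext u i = ext v i := by
      intro i
      induction i using hwf.induction with
      | _ i ih =>
        by_cases hi : i ∈ S
        · obtain ⟨δ, hδ⟩ := hε i
          have h1 := hδ (ext u)
          have h2 := hδ (ext v)
          rw [← h1, ← h2, huv]
          congr 1
          funext j
          by_cases hj : (j : Fin n) ∈ S
          · exact ih j ⟨j.2, hi, hj⟩
          · simp [ext, hj]
        · simp [ext, hi]
    funext s
    have := keyv s
    simpa [ext, s.2] using this
  have hcard := Fintype.card_le_of_injective _ hinj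
  simp only [Fintype.card_fun, Fintype.card_coe, ZMod.card, Fintype.card_fin] at hcard
  exact (Nat.pow_le_pow_iff_right (by norm_num)).mp hcard

/-- The MAIS lower bound: `mais G ≤ ℓ*(G)` for every side-information digraph. -/
theorem stmt6 {n : ℕ} (G : Fin n → Fin n → Prop) (hG : ∀ i, ¬ G i i) :
    mais G ≤ optLen G := by
  classical
  have hne : ∃ ε : (Fin n → ZMod 2) → (Fin n → ZMod 2), IsIndexCode G ε :=
    ⟨id, fun i => ⟨fun c _ => c i, fun x => rfl⟩⟩
  have hset : (optLen G) ∈ {ℓ : ℕ | ∃ ε : (Fin n → ZMod 2) → (Fin ℓ → ZMod 2),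
      IsIndexCode G ε} := Nat.sInf_mem ⟨n, hne⟩
  obtain ⟨ε, hε⟩ := hset
  apply csSup_le
  · refine ⟨0, ∅, rfl, fun i h => ?_⟩
    cases h with
    | single h => exact absurd h.2.1 (Finset.notMem_empty i)
    | tail _ h => exact absurd h.2.2 (Finset.notMem_empty i)
  · rintro k ⟨S, rfl, hS⟩
    exact key_mais G S hS ε hε
end

section
/- For every side-information digraph G, the optimal index codelength is at most the minrank: ℓ*(G) ≤ minrank(G); in particular, for any n×n GF(2)-matrix M with M_{ii} = 1 for all i and M_{ij} = 0 whenever i ≠ j and i→j is not an arc of G, there is a linear index code for G of length equal to the rank of M. -/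
open Finset Matrix

theorem Matrix.exists_linearMap_decode_mulVec {K m n : Type*} [Field K] [Fintype m]
    [Fintype n] (M : Matrix m n K) :
    ∃ (ε : (n → K) →ₗ[K] (Fin M.rank → K)) (dec : (Fin M.rank → K) → m → K),
      ∀ x, dec (ε x) = M *ᵥ x := by
  let b : Module.Basis (Fin M.rank) K (LinearMap.range M.mulVecLin) := Module.finBasis K _
  exact ⟨b.equivFun.toLinearMap ∘ₗ M.mulVecLin.rangeRestrict,
    fun c => (b.equivFun.symm c : m → K), fun x => by simp [b]⟩

theorem Matrix.mulVec_apply_eq_add_sum_arcs {R ι : Type*} [CommSemiring R] [Fintype ι]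
    [DecidableEq ι] (G : ι → ι → Prop) [DecidableRel G] (M : Matrix ι ι R)
    (hdiag : ∀ i, M i i = 1) (hfit : ∀ i j, i ≠ j → ¬ G i j → M i j = 0)
    (x : ι → R) (i : ι) :
    (M *ᵥ x) i = x i + ∑ j ∈ (univ.erase i).filter (G i), M i j * x j := by
  rw [mulVec, dotProduct, ← add_sum_erase _ _ (mem_univ i), hdiag, one_mul,
    sum_filter_of_ne]
  intro j hj hne
  by_contra hij
  exact hne (by rw [hfit i j (ne_of_mem_erase hj).symm hij, zero_mul])

theorem isIndexCode_of_decode_mulVec {n ℓ : ℕ} (G : Fin n → Fin n → Prop)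
    (M : Matrix (Fin n) (Fin n) (ZMod 2)) (hdiag : ∀ i, M i i = 1)
    (hfit : ∀ i j, i ≠ j → ¬ G i j → M i j = 0)
    (ε : (Fin n → ZMod 2) → (Fin ℓ → ZMod 2)) (dec : (Fin ℓ → ZMod 2) → Fin n → ZMod 2)
    (hdec : ∀ x, dec (ε x) = M *ᵥ x) : IsIndexCode G ε := by
  classical
  intro i
  refine ⟨fun c s => dec c i -
    ∑ j ∈ (univ.erase i).filter (G i), M i j * (if h : G i j then s ⟨j, h⟩ else 0), fun x => ?_⟩
  have hside : ∑ j ∈ (univ.erase i).filter (G i), M i j * (if h : G i j then x j else 0)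
      = ∑ j ∈ (univ.erase i).filter (G i), M i j * x j :=
    sum_congr rfl fun j hj => by rw [dif_pos (mem_filter.1 hj).2]
  simp only [hdec, hside, M.mulVec_apply_eq_add_sum_arcs G hdiag hfit, add_sub_cancel_right]

theorem exists_matrix_rank_eq_minrank {n : ℕ} (G : Fin n → Fin n → Prop) :
    ∃ M : Matrix (Fin n) (Fin n) (ZMod 2),
      (∀ i, M i i = 1) ∧ (∀ i j, i ≠ j → ¬ G i j → M i j = 0) ∧ M.rank = minrank G :=
  Nat.sInf_mem (s := {r | ∃ M : Matrix (Fin n) (Fin n) (ZMod 2),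
      (∀ i, M i i = 1) ∧ (∀ i j, i ≠ j → ¬ G i j → M i j = 0) ∧ M.rank = r})
    ⟨_, 1, one_apply_eq, fun _ _ hij _ => one_apply_ne hij, rfl⟩

theorem exists_linear_isIndexCode_of_fits {n : ℕ} (G : Fin n → Fin n → Prop)
    (M : Matrix (Fin n) (Fin n) (ZMod 2)) (hdiag : ∀ i, M i i = 1)
    (hfit : ∀ i j, i ≠ j → ¬ G i j → M i j = 0) :
    ∃ ε : (Fin n → ZMod 2) → (Fin M.rank → ZMod 2),
      IsLinearMap (ZMod 2) ε ∧ IsIndexCode G ε := by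
  obtain ⟨ε, dec, hdec⟩ := M.exists_linearMap_decode_mulVec
  exact ⟨ε, ε.isLinear, isIndexCode_of_decode_mulVec G M hdiag hfit ε dec hdec⟩

theorem stmt7_general {n : ℕ} (G : Fin n → Fin n → Prop) :
    optLen G ≤ minrank G ∧
    ∀ M : Matrix (Fin n) (Fin n) (ZMod 2),
      (∀ i, M i i = 1) → (∀ i j, i ≠ j → ¬ G i j → M i j = 0) →
      ∃ ε : (Fin n → ZMod 2) → (Fin M.rank → ZMod 2),
        IsLinearMap (ZMod 2) ε ∧ IsIndexCode G ε := by
  refine ⟨?_, exists_linear_isIndexCode_of_fits G⟩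
  obtain ⟨M, hdiag, hfit, hrank⟩ := exists_matrix_rank_eq_minrank G
  obtain ⟨ε, -, hε⟩ := exists_linear_isIndexCode_of_fits G M hdiag hfit
  exact hrank ▸ Nat.sInf_le ⟨ε, hε⟩

/-- The minrank upper bound: `ℓ*(G) ≤ minrank G`, and every matrix fitting `G`
yields a linear index code of length equal to its rank. -/
theorem stmt7 {n : ℕ} (G : Fin n → Fin n → Prop) (hG : ∀ i, ¬ G i i) :
    optLen G ≤ minrank G ∧
    ∀ M : Matrix (Fin n) (Fin n) (ZMod 2),
      (∀ i, M i i = 1) → (∀ i j, i ≠ j → ¬ G i j → M i j = 0) →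
      ∃ ε : (Fin n → ZMod 2) → (Fin M.rank → ZMod 2),
        IsLinearMap (ZMod 2) ε ∧ IsIndexCode G ε :=
  stmt7_general G
end

section
/- Let G be a side-information digraph with exactly 5 vertices and mais(G) = 2. If G contains an undirected cycle of length four but no undirected cycle of length three, then ℓ*(G) = 2, and this is achieved by a linear index code over GF(2). -/
private lemma two_zmod : ∀ z : ZMod 2, z + z = 0 := by decide

private lemma mk3 (G : Fin 5 → Fin 5 → Prop) (a b c : Fin 5) (hab : a ≠ b) (hbc : b ≠ c) (hac : a ≠ c)
    (e1 : G a b) (e1' : G b a) (e2 : G b c) (e2' : G c b) (e3 : G c a) (e3' : G a c) :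
    HasUndirCycleLen G 3 := by
  have h3 : ∀ t : ZMod 3, t = 0 ∨ t = 1 ∨ t = 2 := by decide
  have d01 : (0:ZMod 3) ≠ 1 := by decide
  have d02 : (0:ZMod 3) ≠ 2 := by decide
  have d12 : (1:ZMod 3) ≠ 2 := by decide
  have d10 : (1:ZMod 3) ≠ 0 := by decide
  have d20 : (2:ZMod 3) ≠ 0 := by decide
  have d21 : (2:ZMod 3) ≠ 1 := by decide
  have a01 : (0:ZMod 3) + 1 = 1 := by decide
  have a12 : (1:ZMod 3) + 1 = 2 := by decide
  have a20 : (2:ZMod 3) + 1 = 0 := by decide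
  refine ⟨le_refl 3, fun t => if t = 0 then a else if t = 1 then b else c, ?_, ?_⟩
  · intro s t h
    rcases h3 s with rfl|rfl|rfl <;> rcases h3 t with rfl|rfl|rfl <;>
      simp only [if_pos, if_neg, d01, d02, d12, d10, d20, d21, if_true, if_false] at h <;>
      first
        | rfl
        | exact absurd h hab | exact absurd h hbc | exact absurd h hac
        | exact absurd h.symm hab | exact absurd h.symm hbc | exact absurd h.symm hac
  · intro t
    rcases h3 t with rfl|rfl|rfl <;>
      simp only [a01, a12, a20, if_pos, if_neg, d01, d02, d12, d10, d20, d21, if_true,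
        if_false] <;> exact ⟨by assumption, by assumption⟩

private lemma cyc_extract (R : Fin 5 → Fin 5 → Prop) (a b c : Fin 5)
    (hab : a ≠ b) (hbc : b ≠ c) (hac : a ≠ c) (hirr : ∀ x, ¬ R x x)
    (h : ¬ AcyclicOn R ({a, b, c} : Finset (Fin 5))) :
    (R a b ∧ R b a) ∨ (R a c ∧ R c a) ∨ (R b c ∧ R c b) ∨
      (R a b ∧ R b c ∧ R c a) ∨ (R a c ∧ R c b ∧ R b a) := by
  by_contra hP
  apply h
  intro i hT
  have hmem : ∀ x : Fin 5, x ∈ ({a, b, c} : Finset (Fin 5)) → x = a ∨ x = b ∨ x = c := by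
    intro x hx; simpa using hx
  have hP1 : ¬ (R a b ∧ R b a) := fun d => hP (Or.inl d)
  have hP2 : ¬ (R a c ∧ R c a) := fun d => hP (Or.inr (Or.inl d))
  have hP3 : ¬ (R b c ∧ R c b) := fun d => hP (Or.inr (Or.inr (Or.inl d)))
  have hP4 : ¬ (R a b ∧ R b c ∧ R c a) := fun d => hP (Or.inr (Or.inr (Or.inr (Or.inl d))))
  have hP5 : ¬ (R a c ∧ R c b ∧ R b a) := fun d => hP (Or.inr (Or.inr (Or.inr (Or.inr d))))
  have pair : ∀ x y : Fin 5, x ∈ ({a, b, c} : Finset (Fin 5)) →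
      y ∈ ({a, b, c} : Finset (Fin 5)) → R x y → R y x → False := by
    intro x y hx hy h1 h2
    rcases hmem x hx with rfl|rfl|rfl <;> rcases hmem y hy with rfl|rfl|rfl
    · exact hirr _ h1
    · exact hP1 ⟨h1, h2⟩
    · exact hP2 ⟨h1, h2⟩
    · exact hP1 ⟨h2, h1⟩
    · exact hirr _ h1
    · exact hP3 ⟨h1, h2⟩
    · exact hP2 ⟨h2, h1⟩
    · exact hP3 ⟨h2, h1⟩
    · exact hirr _ h1
  have tri : ∀ x y z : Fin 5, x ∈ ({a, b, c} : Finset (Fin 5)) →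
      y ∈ ({a, b, c} : Finset (Fin 5)) → z ∈ ({a, b, c} : Finset (Fin 5)) →
      R x y → R y z → R z x → False := by
    intro x y z hx hy hz h1 h2 h3
    rcases hmem x hx with rfl|rfl|rfl <;> rcases hmem y hy with rfl|rfl|rfl <;>
      rcases hmem z hz with rfl|rfl|rfl
    · exact hirr _ h1
    · exact hirr _ h1
    · exact hirr _ h1
    · exact hirr _ h3
    · exact hirr _ h2
    · exact hP4 ⟨h1, h2, h3⟩
    · exact hirr _ h3
    · exact hP5 ⟨h1, h2, h3⟩
    · exact hirr _ h2
    · exact hirr _ h2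
    · exact hirr _ h3
    · exact hP5 ⟨h2, h3, h1⟩
    · exact hirr _ h1
    · exact hirr _ h1
    · exact hirr _ h1
    · exact hP4 ⟨h3, h1, h2⟩
    · exact hirr _ h3
    · exact hirr _ h2
    · exact hirr _ h2
    · exact hP4 ⟨h2, h3, h1⟩
    · exact hirr _ h3
    · exact hP5 ⟨h3, h1, h2⟩
    · exact hirr _ h2
    · exact hirr _ h3
    · exact hirr _ h1
    · exact hirr _ h1
    · exact hirr _ h1
  have hScard : ({a, b, c} : Finset (Fin 5)).card = 3 := by
    rw [Finset.card_insert_of_notMem (by simp [hab, hac]),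
      Finset.card_insert_of_notMem (by simp [hbc]), Finset.card_singleton]
  have key : ∀ x y : Fin 5,
      Relation.TransGen (fun p q => R p q ∧ p ∈ ({a, b, c} : Finset (Fin 5)) ∧
        q ∈ ({a, b, c} : Finset (Fin 5))) x y →
      x ≠ y ∧ ((R x y ∧ x ∈ ({a, b, c} : Finset (Fin 5)) ∧ y ∈ ({a, b, c} : Finset (Fin 5))) ∨
        ∃ w, (R x w ∧ x ∈ ({a, b, c} : Finset (Fin 5)) ∧ w ∈ ({a, b, c} : Finset (Fin 5))) ∧
          (R w y ∧ w ∈ ({a, b, c} : Finset (Fin 5)) ∧ y ∈ ({a, b, c} : Finset (Fin 5)))) := by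
    intro x y hxy
    induction hxy with
    | single h1 =>
      refine ⟨?_, Or.inl h1⟩
      intro e; rw [e] at h1; exact hirr _ h1.1
    | @tail m z hxm hmz ih =>
      obtain ⟨hxm', hcase⟩ := ih
      rcases hcase with h1 | ⟨w, h1, h2⟩
      · by_cases hxz : x = z
        · subst hxz; exact (pair x m h1.2.1 h1.2.2 h1.1 hmz.1).elim
        · exact ⟨hxz, Or.inr ⟨m, h1, hmz⟩⟩
      · have hxw : x ≠ w := by intro e; rw [e] at h1; exact hirr _ h1.1
        have hwm : w ≠ m := by intro e; rw [e] at h2; exact hirr _ h2.1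
        have hsub : ({x, w, m} : Finset (Fin 5)) ⊆ ({a, b, c} : Finset (Fin 5)) := by
          intro t ht
          simp only [Finset.mem_insert, Finset.mem_singleton] at ht
          rcases ht with rfl|rfl|rfl
          exacts [h1.2.1, h2.2.1, h2.2.2]
        have hcard3 : ({x, w, m} : Finset (Fin 5)).card = 3 := by
          rw [Finset.card_insert_of_notMem (by simp [hxw, hxm']),
            Finset.card_insert_of_notMem (by simp [hwm]), Finset.card_singleton]
        have heq : ({x, w, m} : Finset (Fin 5)) = ({a, b, c} : Finset (Fin 5)) :=
          Finset.eq_of_subset_of_card_le hsub (by rw [hScard, hcard3])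
        have hz : z ∈ ({x, w, m} : Finset (Fin 5)) := by rw [heq]; exact hmz.2.2
        simp only [Finset.mem_insert, Finset.mem_singleton] at hz
        rcases hz with rfl|rfl|rfl
        · exact (tri z w m h1.2.1 h2.2.1 h2.2.2 h1.1 h2.1 hmz.1).elim
        · exact (pair z m h2.2.1 h2.2.2 h2.1 hmz.1).elim
        · exact (hirr z hmz.1).elim
  exact (key i i hT).1 rfl

private lemma lower5 (G : Fin 5 → Fin 5 → Prop) (hG : ∀ i, ¬ G i i) (a b : Fin 5) (hab : a ≠ b)
    (hba : ¬ G b a) {l : ℕ} (hl : l ≤ 1)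
    (ε : (Fin 5 → ZMod 2) → (Fin l → ZMod 2)) (hcode : IsIndexCode G ε) : False := by
  obtain ⟨δa, hδa⟩ := hcode a
  obtain ⟨δb, hδb⟩ := hcode b
  have hba' : b ≠ a := Ne.symm hab
  set x : ZMod 2 → ZMod 2 → (Fin 5 → ZMod 2) :=
    fun α β k => if k = a then α else if k = b then β else 0 with hx
  have hxb : ∀ α β, x α β b = β := by intro α β; simp [hx, hba']
  have hxa : ∀ α β, x α β a = α := by intro α β; simp [hx]
  have hsb : ∀ α β, (fun j : {j // G b j} => x α β j.1) = (fun _ => (0:ZMod 2)) := by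
    intro α β; funext j
    have h1 : j.1 ≠ a := by intro e; have hj := j.2; rw [e] at hj; exact hba hj
    have h2 : j.1 ≠ b := by intro e; have hj := j.2; rw [e] at hj; exact hG b hj
    simp [hx, h1, h2]
  have hsa : ∀ α β, (fun j : {j // G a j} => x α β j.1) =
      (fun j => if j.1 = b then β else 0) := by
    intro α β; funext j
    have h1 : j.1 ≠ a := by intro e; have hj := j.2; rw [e] at hj; exact hG a hj
    simp [hx, h1]
  have hinj : Function.Injective (fun p : ZMod 2 × ZMod 2 => ε (x p.1 p.2)) := by
    intro p p' h
    have h' : ε (x p.1 p.2) = ε (x p'.1 p'.2) := h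
    have hb2 : p.2 = p'.2 := by
      have e1 := hδb (x p.1 p.2); rw [hsb, hxb] at e1
      have e2 := hδb (x p'.1 p'.2); rw [hsb, hxb] at e2
      rw [← e1, ← e2, h']
    have ha2 : p.1 = p'.1 := by
      have e1 := hδa (x p.1 p.2); rw [hsa, hxa] at e1
      have e2 := hδa (x p'.1 p'.2); rw [hsa, hxa] at e2
      rw [← e1, ← e2, h', hb2]
    exact Prod.ext ha2 hb2
  have hcard := Fintype.card_le_of_injective _ hinj
  have hc1 : Fintype.card (ZMod 2 × ZMod 2) = 4 := by simp
  have hc2 : Fintype.card (Fin l → ZMod 2) = 2 ^ l := by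
    rw [Fintype.card_fun]; simp
  rw [hc1, hc2] at hcard
  have hpow : (2:ℕ) ^ l ≤ 2 ^ 1 := Nat.pow_le_pow_right (by norm_num) hl
  omega

set_option maxHeartbeats 4000000 in
/-- Five vertices, `mais G = 2`, an undirected cycle of length four but none
of length three: then `ℓ*(G) = 2`, achieved by a linear index code. -/
theorem stmt13 (G : Fin 5 → Fin 5 → Prop) (hG : ∀ i, ¬ G i i) (hm : mais G = 2)
    (h4 : HasUndirCycleLen G 4) (h3 : ¬ HasUndirCycleLen G 3) :
    optLen G = 2 ∧
    ∃ ε : (Fin 5 → ZMod 2) → (Fin 2 → ZMod 2),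
      IsLinearMap (ZMod 2) ε ∧ IsIndexCode G ε := by
  obtain ⟨-, v, hvinj, hvedge⟩ := h4
  have a01 : (0:ZMod 4) + 1 = 1 := by decide
  have a12 : (1:ZMod 4) + 1 = 2 := by decide
  have a23 : (2:ZMod 4) + 1 = 3 := by decide
  have a30 : (3:ZMod 4) + 1 = 0 := by decide
  have e01 : G (v 0) (v 1) := by have := (hvedge 0).1; rwa [a01] at this
  have e10 : G (v 1) (v 0) := by have := (hvedge 0).2; rwa [a01] at this
  have e12 : G (v 1) (v 2) := by have := (hvedge 1).1; rwa [a12] at this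
  have e21 : G (v 2) (v 1) := by have := (hvedge 1).2; rwa [a12] at this
  have e23 : G (v 2) (v 3) := by have := (hvedge 2).1; rwa [a23] at this
  have e32 : G (v 3) (v 2) := by have := (hvedge 2).2; rwa [a23] at this
  have e30 : G (v 3) (v 0) := by have := (hvedge 3).1; rwa [a30] at this
  have e03 : G (v 0) (v 3) := by have := (hvedge 3).2; rwa [a30] at this
  have n01 : v 0 ≠ v 1 := hvinj.ne (by decide)
  have n02 : v 0 ≠ v 2 := hvinj.ne (by decide)
  have n03 : v 0 ≠ v 3 := hvinj.ne (by decide)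
  have n12 : v 1 ≠ v 2 := hvinj.ne (by decide)
  have n13 : v 1 ≠ v 3 := hvinj.ne (by decide)
  have n23 : v 2 ≠ v 3 := hvinj.ne (by decide)
  have hq4 : ({v 0, v 1, v 2, v 3} : Finset (Fin 5)).card = 4 := by
    rw [Finset.card_insert_of_notMem (by simp [n01, n02, n03]),
      Finset.card_insert_of_notMem (by simp [n12, n13]),
      Finset.card_insert_of_notMem (by simp [n23]), Finset.card_singleton]
  obtain ⟨u, hu⟩ : ∃ u : Fin 5, u ∉ ({v 0, v 1, v 2, v 3} : Finset (Fin 5)) := by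
    by_contra hcon
    push_neg at hcon
    have h5 : (Finset.univ : Finset (Fin 5)).card ≤
        ({v 0, v 1, v 2, v 3} : Finset (Fin 5)).card :=
      Finset.card_le_card (fun x _ => hcon x)
    rw [hq4] at h5
    simp at h5
  have nu0 : u ≠ v 0 := fun e => hu (by simp [e])
  have nu1 : u ≠ v 1 := fun e => hu (by simp [e])
  have nu2 : u ≠ v 2 := fun e => hu (by simp [e])
  have nu3 : u ≠ v 3 := fun e => hu (by simp [e])
  have huniv5 : ({u, v 0, v 1, v 2, v 3} : Finset (Fin 5)).card = 5 := by
    rw [Finset.card_insert_of_notMem (by simp [nu0, nu1, nu2, nu3]), hq4]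
  have hallmem : ({u, v 0, v 1, v 2, v 3} : Finset (Fin 5)) = Finset.univ :=
    Finset.eq_univ_of_card _ (by rw [huniv5]; simp)
  have hall : ∀ i : Fin 5, u = i ∨ v 0 = i ∨ v 1 = i ∨ v 2 = i ∨ v 3 = i := by
    intro i
    have hi : i ∈ ({u, v 0, v 1, v 2, v 3} : Finset (Fin 5)) := by
      rw [hallmem]; exact Finset.mem_univ i
    simp only [Finset.mem_insert, Finset.mem_singleton] at hi
    tauto
  have hno02 : ¬ (G (v 0) (v 2) ∧ G (v 2) (v 0)) := fun ⟨h1, h2⟩ =>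
    h3 (mk3 G (v 0) (v 1) (v 2) n01 n12 n02 e01 e10 e12 e21 h2 h1)
  have hno13 : ¬ (G (v 1) (v 3) ∧ G (v 3) (v 1)) := fun ⟨h1, h2⟩ =>
    h3 (mk3 G (v 1) (v 2) (v 3) n12 n23 n13 e12 e21 e23 e32 h2 h1)
  have hbdd : BddAbove {k : ℕ | ∃ S : Finset (Fin 5), S.card = k ∧ AcyclicOn G S} := by
    refine ⟨5, ?_⟩
    rintro k ⟨S, rfl, -⟩
    exact le_trans (Finset.card_le_univ S) (by simp)
  have hno3 : ∀ S : Finset (Fin 5), S.card = 3 → ¬ AcyclicOn G S := by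
    intro S hS hac
    have h3le : 3 ≤ mais G := by
      unfold mais; exact le_csSup hbdd ⟨S, hS, hac⟩
    rw [hm] at h3le; omega
  have hcA : ¬ AcyclicOn G ({u, v 0, v 2} : Finset (Fin 5)) := by
    refine hno3 _ ?_
    rw [Finset.card_insert_of_notMem (by simp [nu0, nu2]),
      Finset.card_insert_of_notMem (by simp [n02]), Finset.card_singleton]
  have hcB : ¬ AcyclicOn G ({u, v 1, v 3} : Finset (Fin 5)) := by
    refine hno3 _ ?_
    rw [Finset.card_insert_of_notMem (by simp [nu1, nu3]),
      Finset.card_insert_of_notMem (by simp [n13]), Finset.card_singleton]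
  have hAd : (G u (v 0) ∧ G (v 0) u) ∨ (G u (v 2) ∧ G (v 2) u) ∨
      (G u (v 0) ∧ G (v 0) (v 2) ∧ G (v 2) u) ∨ (G u (v 2) ∧ G (v 2) (v 0) ∧ G (v 0) u) := by
    rcases cyc_extract G u (v 0) (v 2) nu0 n02 nu2 hG hcA with h|h|h|h|h
    · exact Or.inl h
    · exact Or.inr (Or.inl h)
    · exact absurd h hno02
    · exact Or.inr (Or.inr (Or.inl h))
    · exact Or.inr (Or.inr (Or.inr h))
  have hBd : (G u (v 1) ∧ G (v 1) u) ∨ (G u (v 3) ∧ G (v 3) u) ∨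
      (G u (v 1) ∧ G (v 1) (v 3) ∧ G (v 3) u) ∨ (G u (v 3) ∧ G (v 3) (v 1) ∧ G (v 1) u) := by
    rcases cyc_extract G u (v 1) (v 3) nu1 n13 nu3 hG hcB with h|h|h|h|h
    · exact Or.inl h
    · exact Or.inr (Or.inl h)
    · exact absurd h hno13
    · exact Or.inr (Or.inr (Or.inl h))
    · exact Or.inr (Or.inr (Or.inr h))
  have hex : ∃ ε : (Fin 5 → ZMod 2) → (Fin 2 → ZMod 2),
      IsLinearMap (ZMod 2) ε ∧ IsIndexCode G ε := by
    rcases hAd with hA|hA|hA|hA <;> rcases hBd with hB|hB|hB|hB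
    · -- combo A=('0', '0') B=('1', '1')
      obtain ⟨hA1, hA2⟩ := hA
      obtain ⟨hB1, hB2⟩ := hB
      exact absurd (mk3 G (v 0) u (v 1) (Ne.symm nu0) nu1 n01 hA2 hA1 hB1 hB2 e10 e01) h3
    · -- combo A=('0', '0') B=('3', '3')
      obtain ⟨hA1, hA2⟩ := hA
      obtain ⟨hB1, hB2⟩ := hB
      exact absurd (mk3 G (v 0) u (v 3) (Ne.symm nu0) nu3 n03 hA2 hA1 hB1 hB2 e30 e03) h3
    · -- combo A=('0', '0') B=('1', '3')
      obtain ⟨hA1, hA2⟩ := hA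
      obtain ⟨hB1, hB2, hB3⟩ := hB
      refine ⟨fun x => ![x u + x (v 0) + x (v 2) + x (v 3), x (v 1) + x (v 2) + x (v 3)], ⟨?_, ?_⟩, ?_⟩
      · intro x y; funext kk; fin_cases kk <;> simp <;> ring
      · intro cc x; funext kk; fin_cases kk <;> simp <;> ring
      · intro i
        rcases hall i with rfl|rfl|rfl|rfl|rfl
        · refine ⟨fun y s => y 0 + y 1 - (s ⟨(v 0), hA1⟩ + s ⟨(v 1), hB1⟩), fun x => ?_⟩
          simp only [Matrix.cons_val_zero, Matrix.cons_val_one, Matrix.head_cons]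
          linear_combination two_zmod (x (v 2)) + two_zmod (x (v 3))
        · refine ⟨fun y s => y 0 + y 1 - (s ⟨(v 1), e01⟩ + s ⟨u, hA2⟩), fun x => ?_⟩
          simp only [Matrix.cons_val_zero, Matrix.cons_val_one, Matrix.head_cons]
          linear_combination two_zmod (x (v 2)) + two_zmod (x (v 3))
        · refine ⟨fun y s => y 1 - (s ⟨(v 2), e12⟩ + s ⟨(v 3), hB2⟩), fun x => ?_⟩
          simp only [Matrix.cons_val_zero, Matrix.cons_val_one, Matrix.head_cons]
          ring
        · refine ⟨fun y s => y 1 - (s ⟨(v 1), e21⟩ + s ⟨(v 3), e23⟩), fun x => ?_⟩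
          simp only [Matrix.cons_val_zero, Matrix.cons_val_one, Matrix.head_cons]
          ring
        · refine ⟨fun y s => y 0 - (s ⟨(v 0), e30⟩ + s ⟨(v 2), e32⟩ + s ⟨u, hB3⟩), fun x => ?_⟩
          simp only [Matrix.cons_val_zero, Matrix.cons_val_one, Matrix.head_cons]
          ring
    · -- combo A=('0', '0') B=('3', '1')
      obtain ⟨hA1, hA2⟩ := hA
      obtain ⟨hB1, hB2, hB3⟩ := hB
      refine ⟨fun x => ![x u + x (v 0) + x (v 3), x (v 1) + x (v 2) + x (v 3)], ⟨?_, ?_⟩, ?_⟩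
      · intro x y; funext kk; fin_cases kk <;> simp <;> ring
      · intro cc x; funext kk; fin_cases kk <;> simp <;> ring
      · intro i
        rcases hall i with rfl|rfl|rfl|rfl|rfl
        · refine ⟨fun y s => y 0 - (s ⟨(v 0), hA1⟩ + s ⟨(v 3), hB1⟩), fun x => ?_⟩
          simp only [Matrix.cons_val_zero, Matrix.cons_val_one, Matrix.head_cons]
          ring
        · refine ⟨fun y s => y 0 - (s ⟨(v 3), e03⟩ + s ⟨u, hA2⟩), fun x => ?_⟩
          simp only [Matrix.cons_val_zero, Matrix.cons_val_one, Matrix.head_cons]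
          ring
        · refine ⟨fun y s => y 0 + y 1 - (s ⟨(v 0), e10⟩ + s ⟨(v 2), e12⟩ + s ⟨u, hB3⟩), fun x => ?_⟩
          simp only [Matrix.cons_val_zero, Matrix.cons_val_one, Matrix.head_cons]
          linear_combination two_zmod (x (v 3))
        · refine ⟨fun y s => y 1 - (s ⟨(v 1), e21⟩ + s ⟨(v 3), e23⟩), fun x => ?_⟩
          simp only [Matrix.cons_val_zero, Matrix.cons_val_one, Matrix.head_cons]
          ring
        · refine ⟨fun y s => y 1 - (s ⟨(v 1), hB2⟩ + s ⟨(v 2), e32⟩), fun x => ?_⟩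
          simp only [Matrix.cons_val_zero, Matrix.cons_val_one, Matrix.head_cons]
          ring
    · -- combo A=('2', '2') B=('1', '1')
      obtain ⟨hA1, hA2⟩ := hA
      obtain ⟨hB1, hB2⟩ := hB
      exact absurd (mk3 G (v 2) u (v 1) (Ne.symm nu2) nu1 (Ne.symm n12) hA2 hA1 hB1 hB2 e12 e21) h3
    · -- combo A=('2', '2') B=('3', '3')
      obtain ⟨hA1, hA2⟩ := hA
      obtain ⟨hB1, hB2⟩ := hB
      exact absurd (mk3 G (v 2) u (v 3) (Ne.symm nu2) nu3 n23 hA2 hA1 hB1 hB2 e32 e23) h3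
    · -- combo A=('2', '2') B=('1', '3')
      obtain ⟨hA1, hA2⟩ := hA
      obtain ⟨hB1, hB2, hB3⟩ := hB
      refine ⟨fun x => ![x u + x (v 1) + x (v 2), x (v 0) + x (v 1) + x (v 3)], ⟨?_, ?_⟩, ?_⟩
      · intro x y; funext kk; fin_cases kk <;> simp <;> ring
      · intro cc x; funext kk; fin_cases kk <;> simp <;> ring
      · intro i
        rcases hall i with rfl|rfl|rfl|rfl|rfl
        · refine ⟨fun y s => y 0 - (s ⟨(v 1), hB1⟩ + s ⟨(v 2), hA1⟩), fun x => ?_⟩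
          simp only [Matrix.cons_val_zero, Matrix.cons_val_one, Matrix.head_cons]
          ring
        · refine ⟨fun y s => y 1 - (s ⟨(v 1), e01⟩ + s ⟨(v 3), e03⟩), fun x => ?_⟩
          simp only [Matrix.cons_val_zero, Matrix.cons_val_one, Matrix.head_cons]
          ring
        · refine ⟨fun y s => y 1 - (s ⟨(v 0), e10⟩ + s ⟨(v 3), hB2⟩), fun x => ?_⟩
          simp only [Matrix.cons_val_zero, Matrix.cons_val_one, Matrix.head_cons]
          ring
        · refine ⟨fun y s => y 0 - (s ⟨(v 1), e21⟩ + s ⟨u, hA2⟩), fun x => ?_⟩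
          simp only [Matrix.cons_val_zero, Matrix.cons_val_one, Matrix.head_cons]
          ring
        · refine ⟨fun y s => y 0 + y 1 - (s ⟨(v 0), e30⟩ + s ⟨(v 2), e32⟩ + s ⟨u, hB3⟩), fun x => ?_⟩
          simp only [Matrix.cons_val_zero, Matrix.cons_val_one, Matrix.head_cons]
          linear_combination two_zmod (x (v 1))
    · -- combo A=('2', '2') B=('3', '1')
      obtain ⟨hA1, hA2⟩ := hA
      obtain ⟨hB1, hB2, hB3⟩ := hB
      refine ⟨fun x => ![x u + x (v 2) + x (v 3), x (v 0) + x (v 1) + x (v 3)], ⟨?_, ?_⟩, ?_⟩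
      · intro x y; funext kk; fin_cases kk <;> simp <;> ring
      · intro cc x; funext kk; fin_cases kk <;> simp <;> ring
      · intro i
        rcases hall i with rfl|rfl|rfl|rfl|rfl
        · refine ⟨fun y s => y 0 - (s ⟨(v 2), hA1⟩ + s ⟨(v 3), hB1⟩), fun x => ?_⟩
          simp only [Matrix.cons_val_zero, Matrix.cons_val_one, Matrix.head_cons]
          ring
        · refine ⟨fun y s => y 1 - (s ⟨(v 1), e01⟩ + s ⟨(v 3), e03⟩), fun x => ?_⟩
          simp only [Matrix.cons_val_zero, Matrix.cons_val_one, Matrix.head_cons]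
          ring
        · refine ⟨fun y s => y 0 + y 1 - (s ⟨(v 0), e10⟩ + s ⟨(v 2), e12⟩ + s ⟨u, hB3⟩), fun x => ?_⟩
          simp only [Matrix.cons_val_zero, Matrix.cons_val_one, Matrix.head_cons]
          linear_combination two_zmod (x (v 3))
        · refine ⟨fun y s => y 0 - (s ⟨(v 3), e23⟩ + s ⟨u, hA2⟩), fun x => ?_⟩
          simp only [Matrix.cons_val_zero, Matrix.cons_val_one, Matrix.head_cons]
          ring
        · refine ⟨fun y s => y 1 - (s ⟨(v 0), e30⟩ + s ⟨(v 1), hB2⟩), fun x => ?_⟩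
          simp only [Matrix.cons_val_zero, Matrix.cons_val_one, Matrix.head_cons]
          ring
    · -- combo A=('0', '2') B=('1', '1')
      obtain ⟨hA1, hA2, hA3⟩ := hA
      obtain ⟨hB1, hB2⟩ := hB
      refine ⟨fun x => ![x u + x (v 1) + x (v 2) + x (v 3), x (v 0) + x (v 2) + x (v 3)], ⟨?_, ?_⟩, ?_⟩
      · intro x y; funext kk; fin_cases kk <;> simp <;> ring
      · intro cc x; funext kk; fin_cases kk <;> simp <;> ring
      · intro i
        rcases hall i with rfl|rfl|rfl|rfl|rfl
        · refine ⟨fun y s => y 0 + y 1 - (s ⟨(v 0), hA1⟩ + s ⟨(v 1), hB1⟩), fun x => ?_⟩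
          simp only [Matrix.cons_val_zero, Matrix.cons_val_one, Matrix.head_cons]
          linear_combination two_zmod (x (v 2)) + two_zmod (x (v 3))
        · refine ⟨fun y s => y 1 - (s ⟨(v 2), hA2⟩ + s ⟨(v 3), e03⟩), fun x => ?_⟩
          simp only [Matrix.cons_val_zero, Matrix.cons_val_one, Matrix.head_cons]
          ring
        · refine ⟨fun y s => y 0 + y 1 - (s ⟨(v 0), e10⟩ + s ⟨u, hB2⟩), fun x => ?_⟩
          simp only [Matrix.cons_val_zero, Matrix.cons_val_one, Matrix.head_cons]
          linear_combination two_zmod (x (v 2)) + two_zmod (x (v 3))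
        · refine ⟨fun y s => y 0 - (s ⟨(v 1), e21⟩ + s ⟨(v 3), e23⟩ + s ⟨u, hA3⟩), fun x => ?_⟩
          simp only [Matrix.cons_val_zero, Matrix.cons_val_one, Matrix.head_cons]
          ring
        · refine ⟨fun y s => y 1 - (s ⟨(v 0), e30⟩ + s ⟨(v 2), e32⟩), fun x => ?_⟩
          simp only [Matrix.cons_val_zero, Matrix.cons_val_one, Matrix.head_cons]
          ring
    · -- combo A=('0', '2') B=('3', '3')
      obtain ⟨hA1, hA2, hA3⟩ := hA
      obtain ⟨hB1, hB2⟩ := hB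
      refine ⟨fun x => ![x u + x (v 1) + x (v 2) + x (v 3), x (v 0) + x (v 1) + x (v 2)], ⟨?_, ?_⟩, ?_⟩
      · intro x y; funext kk; fin_cases kk <;> simp <;> ring
      · intro cc x; funext kk; fin_cases kk <;> simp <;> ring
      · intro i
        rcases hall i with rfl|rfl|rfl|rfl|rfl
        · refine ⟨fun y s => y 0 + y 1 - (s ⟨(v 0), hA1⟩ + s ⟨(v 3), hB1⟩), fun x => ?_⟩
          simp only [Matrix.cons_val_zero, Matrix.cons_val_one, Matrix.head_cons]
          linear_combination two_zmod (x (v 1)) + two_zmod (x (v 2))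
        · refine ⟨fun y s => y 1 - (s ⟨(v 1), e01⟩ + s ⟨(v 2), hA2⟩), fun x => ?_⟩
          simp only [Matrix.cons_val_zero, Matrix.cons_val_one, Matrix.head_cons]
          ring
        · refine ⟨fun y s => y 1 - (s ⟨(v 0), e10⟩ + s ⟨(v 2), e12⟩), fun x => ?_⟩
          simp only [Matrix.cons_val_zero, Matrix.cons_val_one, Matrix.head_cons]
          ring
        · refine ⟨fun y s => y 0 - (s ⟨(v 1), e21⟩ + s ⟨(v 3), e23⟩ + s ⟨u, hA3⟩), fun x => ?_⟩
          simp only [Matrix.cons_val_zero, Matrix.cons_val_one, Matrix.head_cons]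
          ring
        · refine ⟨fun y s => y 0 + y 1 - (s ⟨(v 0), e30⟩ + s ⟨u, hB2⟩), fun x => ?_⟩
          simp only [Matrix.cons_val_zero, Matrix.cons_val_one, Matrix.head_cons]
          linear_combination two_zmod (x (v 1)) + two_zmod (x (v 2))
    · -- combo A=('0', '2') B=('1', '3')
      obtain ⟨hA1, hA2, hA3⟩ := hA
      obtain ⟨hB1, hB2, hB3⟩ := hB
      refine ⟨fun x => ![x u + x (v 2) + x (v 3), x (v 0) + x (v 1) + x (v 2) + x (v 3)], ⟨?_, ?_⟩, ?_⟩
      · intro x y; funext kk; fin_cases kk <;> simp <;> ring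
      · intro cc x; funext kk; fin_cases kk <;> simp <;> ring
      · intro i
        rcases hall i with rfl|rfl|rfl|rfl|rfl
        · refine ⟨fun y s => y 0 + y 1 - (s ⟨(v 0), hA1⟩ + s ⟨(v 1), hB1⟩), fun x => ?_⟩
          simp only [Matrix.cons_val_zero, Matrix.cons_val_one, Matrix.head_cons]
          linear_combination two_zmod (x (v 2)) + two_zmod (x (v 3))
        · refine ⟨fun y s => y 1 - (s ⟨(v 1), e01⟩ + s ⟨(v 2), hA2⟩ + s ⟨(v 3), e03⟩), fun x => ?_⟩
          simp only [Matrix.cons_val_zero, Matrix.cons_val_one, Matrix.head_cons]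
          ring
        · refine ⟨fun y s => y 1 - (s ⟨(v 0), e10⟩ + s ⟨(v 2), e12⟩ + s ⟨(v 3), hB2⟩), fun x => ?_⟩
          simp only [Matrix.cons_val_zero, Matrix.cons_val_one, Matrix.head_cons]
          ring
        · refine ⟨fun y s => y 0 - (s ⟨(v 3), e23⟩ + s ⟨u, hA3⟩), fun x => ?_⟩
          simp only [Matrix.cons_val_zero, Matrix.cons_val_one, Matrix.head_cons]
          ring
        · refine ⟨fun y s => y 0 - (s ⟨(v 2), e32⟩ + s ⟨u, hB3⟩), fun x => ?_⟩
          simp only [Matrix.cons_val_zero, Matrix.cons_val_one, Matrix.head_cons]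
          ring
    · -- combo A=('0', '2') B=('3', '1')
      obtain ⟨hA1, hA2, hA3⟩ := hA
      obtain ⟨hB1, hB2, hB3⟩ := hB
      refine ⟨fun x => ![x u + x (v 1) + x (v 2), x (v 0) + x (v 1) + x (v 2) + x (v 3)], ⟨?_, ?_⟩, ?_⟩
      · intro x y; funext kk; fin_cases kk <;> simp <;> ring
      · intro cc x; funext kk; fin_cases kk <;> simp <;> ring
      · intro i
        rcases hall i with rfl|rfl|rfl|rfl|rfl
        · refine ⟨fun y s => y 0 + y 1 - (s ⟨(v 0), hA1⟩ + s ⟨(v 3), hB1⟩), fun x => ?_⟩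
          simp only [Matrix.cons_val_zero, Matrix.cons_val_one, Matrix.head_cons]
          linear_combination two_zmod (x (v 1)) + two_zmod (x (v 2))
        · refine ⟨fun y s => y 1 - (s ⟨(v 1), e01⟩ + s ⟨(v 2), hA2⟩ + s ⟨(v 3), e03⟩), fun x => ?_⟩
          simp only [Matrix.cons_val_zero, Matrix.cons_val_one, Matrix.head_cons]
          ring
        · refine ⟨fun y s => y 0 - (s ⟨(v 2), e12⟩ + s ⟨u, hB3⟩), fun x => ?_⟩
          simp only [Matrix.cons_val_zero, Matrix.cons_val_one, Matrix.head_cons]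
          ring
        · refine ⟨fun y s => y 0 - (s ⟨(v 1), e21⟩ + s ⟨u, hA3⟩), fun x => ?_⟩
          simp only [Matrix.cons_val_zero, Matrix.cons_val_one, Matrix.head_cons]
          ring
        · refine ⟨fun y s => y 1 - (s ⟨(v 0), e30⟩ + s ⟨(v 1), hB2⟩ + s ⟨(v 2), e32⟩), fun x => ?_⟩
          simp only [Matrix.cons_val_zero, Matrix.cons_val_one, Matrix.head_cons]
          ring
    · -- combo A=('2', '0') B=('1', '1')
      obtain ⟨hA1, hA2, hA3⟩ := hA
      obtain ⟨hB1, hB2⟩ := hB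
      refine ⟨fun x => ![x u + x (v 1) + x (v 2), x (v 0) + x (v 2) + x (v 3)], ⟨?_, ?_⟩, ?_⟩
      · intro x y; funext kk; fin_cases kk <;> simp <;> ring
      · intro cc x; funext kk; fin_cases kk <;> simp <;> ring
      · intro i
        rcases hall i with rfl|rfl|rfl|rfl|rfl
        · refine ⟨fun y s => y 0 - (s ⟨(v 1), hB1⟩ + s ⟨(v 2), hA1⟩), fun x => ?_⟩
          simp only [Matrix.cons_val_zero, Matrix.cons_val_one, Matrix.head_cons]
          ring
        · refine ⟨fun y s => y 0 + y 1 - (s ⟨(v 1), e01⟩ + s ⟨(v 3), e03⟩ + s ⟨u, hA3⟩), fun x => ?_⟩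
          simp only [Matrix.cons_val_zero, Matrix.cons_val_one, Matrix.head_cons]
          linear_combination two_zmod (x (v 2))
        · refine ⟨fun y s => y 0 - (s ⟨(v 2), e12⟩ + s ⟨u, hB2⟩), fun x => ?_⟩
          simp only [Matrix.cons_val_zero, Matrix.cons_val_one, Matrix.head_cons]
          ring
        · refine ⟨fun y s => y 1 - (s ⟨(v 0), hA2⟩ + s ⟨(v 3), e23⟩), fun x => ?_⟩
          simp only [Matrix.cons_val_zero, Matrix.cons_val_one, Matrix.head_cons]
          ring
        · refine ⟨fun y s => y 1 - (s ⟨(v 0), e30⟩ + s ⟨(v 2), e32⟩), fun x => ?_⟩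
          simp only [Matrix.cons_val_zero, Matrix.cons_val_one, Matrix.head_cons]
          ring
    · -- combo A=('2', '0') B=('3', '3')
      obtain ⟨hA1, hA2, hA3⟩ := hA
      obtain ⟨hB1, hB2⟩ := hB
      refine ⟨fun x => ![x u + x (v 2) + x (v 3), x (v 0) + x (v 1) + x (v 2)], ⟨?_, ?_⟩, ?_⟩
      · intro x y; funext kk; fin_cases kk <;> simp <;> ring
      · intro cc x; funext kk; fin_cases kk <;> simp <;> ring
      · intro i
        rcases hall i with rfl|rfl|rfl|rfl|rfl
        · refine ⟨fun y s => y 0 - (s ⟨(v 2), hA1⟩ + s ⟨(v 3), hB1⟩), fun x => ?_⟩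
          simp only [Matrix.cons_val_zero, Matrix.cons_val_one, Matrix.head_cons]
          ring
        · refine ⟨fun y s => y 0 + y 1 - (s ⟨(v 1), e01⟩ + s ⟨(v 3), e03⟩ + s ⟨u, hA3⟩), fun x => ?_⟩
          simp only [Matrix.cons_val_zero, Matrix.cons_val_one, Matrix.head_cons]
          linear_combination two_zmod (x (v 2))
        · refine ⟨fun y s => y 1 - (s ⟨(v 0), e10⟩ + s ⟨(v 2), e12⟩), fun x => ?_⟩
          simp only [Matrix.cons_val_zero, Matrix.cons_val_one, Matrix.head_cons]
          ring
        · refine ⟨fun y s => y 1 - (s ⟨(v 0), hA2⟩ + s ⟨(v 1), e21⟩), fun x => ?_⟩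
          simp only [Matrix.cons_val_zero, Matrix.cons_val_one, Matrix.head_cons]
          ring
        · refine ⟨fun y s => y 0 - (s ⟨(v 2), e32⟩ + s ⟨u, hB2⟩), fun x => ?_⟩
          simp only [Matrix.cons_val_zero, Matrix.cons_val_one, Matrix.head_cons]
          ring
    · -- combo A=('2', '0') B=('1', '3')
      obtain ⟨hA1, hA2, hA3⟩ := hA
      obtain ⟨hB1, hB2, hB3⟩ := hB
      refine ⟨fun x => ![x u + x (v 1) + x (v 2), x (v 0) + x (v 1) + x (v 2) + x (v 3)], ⟨?_, ?_⟩, ?_⟩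
      · intro x y; funext kk; fin_cases kk <;> simp <;> ring
      · intro cc x; funext kk; fin_cases kk <;> simp <;> ring
      · intro i
        rcases hall i with rfl|rfl|rfl|rfl|rfl
        · refine ⟨fun y s => y 0 - (s ⟨(v 1), hB1⟩ + s ⟨(v 2), hA1⟩), fun x => ?_⟩
          simp only [Matrix.cons_val_zero, Matrix.cons_val_one, Matrix.head_cons]
          ring
        · refine ⟨fun y s => y 0 + y 1 - (s ⟨(v 3), e03⟩ + s ⟨u, hA3⟩), fun x => ?_⟩
          simp only [Matrix.cons_val_zero, Matrix.cons_val_one, Matrix.head_cons]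
          linear_combination two_zmod (x (v 1)) + two_zmod (x (v 2))
        · refine ⟨fun y s => y 1 - (s ⟨(v 0), e10⟩ + s ⟨(v 2), e12⟩ + s ⟨(v 3), hB2⟩), fun x => ?_⟩
          simp only [Matrix.cons_val_zero, Matrix.cons_val_one, Matrix.head_cons]
          ring
        · refine ⟨fun y s => y 1 - (s ⟨(v 0), hA2⟩ + s ⟨(v 1), e21⟩ + s ⟨(v 3), e23⟩), fun x => ?_⟩
          simp only [Matrix.cons_val_zero, Matrix.cons_val_one, Matrix.head_cons]
          ring
        · refine ⟨fun y s => y 0 + y 1 - (s ⟨(v 0), e30⟩ + s ⟨u, hB3⟩), fun x => ?_⟩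
          simp only [Matrix.cons_val_zero, Matrix.cons_val_one, Matrix.head_cons]
          linear_combination two_zmod (x (v 1)) + two_zmod (x (v 2))
    · -- combo A=('2', '0') B=('3', '1')
      obtain ⟨hA1, hA2, hA3⟩ := hA
      obtain ⟨hB1, hB2, hB3⟩ := hB
      refine ⟨fun x => ![x u + x (v 2) + x (v 3), x (v 0) + x (v 1) + x (v 2) + x (v 3)], ⟨?_, ?_⟩, ?_⟩
      · intro x y; funext kk; fin_cases kk <;> simp <;> ring
      · intro cc x; funext kk; fin_cases kk <;> simp <;> ring
      · intro i
        rcases hall i with rfl|rfl|rfl|rfl|rfl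
        · refine ⟨fun y s => y 0 - (s ⟨(v 2), hA1⟩ + s ⟨(v 3), hB1⟩), fun x => ?_⟩
          simp only [Matrix.cons_val_zero, Matrix.cons_val_one, Matrix.head_cons]
          ring
        · refine ⟨fun y s => y 0 + y 1 - (s ⟨(v 1), e01⟩ + s ⟨u, hA3⟩), fun x => ?_⟩
          simp only [Matrix.cons_val_zero, Matrix.cons_val_one, Matrix.head_cons]
          linear_combination two_zmod (x (v 2)) + two_zmod (x (v 3))
        · refine ⟨fun y s => y 0 + y 1 - (s ⟨(v 0), e10⟩ + s ⟨u, hB3⟩), fun x => ?_⟩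
          simp only [Matrix.cons_val_zero, Matrix.cons_val_one, Matrix.head_cons]
          linear_combination two_zmod (x (v 2)) + two_zmod (x (v 3))
        · refine ⟨fun y s => y 1 - (s ⟨(v 0), hA2⟩ + s ⟨(v 1), e21⟩ + s ⟨(v 3), e23⟩), fun x => ?_⟩
          simp only [Matrix.cons_val_zero, Matrix.cons_val_one, Matrix.head_cons]
          ring
        · refine ⟨fun y s => y 1 - (s ⟨(v 0), e30⟩ + s ⟨(v 1), hB2⟩ + s ⟨(v 2), e32⟩), fun x => ?_⟩
          simp only [Matrix.cons_val_zero, Matrix.cons_val_one, Matrix.head_cons]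
          ring


  obtain ⟨ε, hlin, hcode⟩ := hex
  have hlow : ∀ (l : ℕ) (ε' : (Fin 5 → ZMod 2) → (Fin l → ZMod 2)),
      IsIndexCode G ε' → 2 ≤ l := by
    intro l ε' hc
    by_contra hlt
    push_neg at hlt
    rcases not_and_or.mp hno02 with hmiss | hmiss
    · exact lower5 G hG (v 2) (v 0) (Ne.symm n02) hmiss (by omega) ε' hc
    · exact lower5 G hG (v 0) (v 2) n02 hmiss (by omega) ε' hc
  constructor
  · have hmem2 : 2 ∈ {l : ℕ | ∃ ε'' : (Fin 5 → ZMod 2) → (Fin l → ZMod 2),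
        IsIndexCode G ε''} := ⟨ε, hcode⟩
    have hne : {l : ℕ | ∃ ε'' : (Fin 5 → ZMod 2) → (Fin l → ZMod 2),
        IsIndexCode G ε''}.Nonempty := ⟨2, hmem2⟩
    unfold optLen
    refine le_antisymm (Nat.sInf_le hmem2) ?_
    obtain ⟨ε', hc'⟩ := Nat.sInf_mem hne
    exact hlow _ ε' hc'
  · exact ⟨ε, hlin, hcode⟩
end

section
/- There exists a side-information digraph G on exactly 5 vertices with mais(G) = 2 and ℓ*(G) = 3; in particular, the MAIS lower bound mais(G) ≤ ℓ*(G) is not tight for all digraphs on five vertices. -/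
/-- The pentagon (undirected 5-cycle) as a side-information digraph. -/
def GD : Fin 5 → Fin 5 → Prop := fun i j => j = i + 1 ∨ i = j + 1

instance : ∀ i j, Decidable (GD i j) := fun i j => by unfold GD; infer_instance

/-- Nine binary strings forming an induced subgraph of the confusion graph
of the pentagon with independence number 2. -/
def sv : Fin 9 → Fin 5 → ZMod 2 :=
  ![![0,1,0,0,0], ![1,0,0,0,0], ![1,1,0,0,0], ![1,0,1,0,0], ![1,0,0,1,0],
    ![1,1,0,1,0], ![1,1,1,0,1], ![1,0,1,0,1], ![1,1,1,0,0]]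

/-- Two message vectors are confusable at some receiver. -/
def Conf (x y : Fin 5 → ZMod 2) : Prop :=
  ∃ i : Fin 5, x i ≠ y i ∧ ∀ j : Fin 5, GD i j → x j = y j

instance : ∀ x y, Decidable (Conf x y) := fun x y => by unfold Conf; infer_instance

lemma ne_of_conf {ℓ : ℕ} {ε : (Fin 5 → ZMod 2) → (Fin ℓ → ZMod 2)}
    (h : IsIndexCode GD ε) {x y : Fin 5 → ZMod 2} (hc : Conf x y) : ε x ≠ ε y := by
  obtain ⟨i, hi, hs⟩ := hc
  obtain ⟨δ, hδ⟩ := h i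
  intro he
  apply hi
  have hx := hδ x
  have hy := hδ y
  have hside : (fun j : {j : Fin 5 // GD i j} => x j.1) = (fun j => y j.1) := by
    funext j; exact hs j.1 j.2
  rw [← hx, ← hy, he, hside]

lemma conf_triple : ∀ a b c : Fin 9, a ≠ b → a ≠ c → b ≠ c →
    Conf (sv a) (sv b) ∨ Conf (sv a) (sv c) ∨ Conf (sv b) (sv c) := by decide

lemma no_short_code {ℓ : ℕ} (hℓ : ℓ ≤ 2)
    (ε : (Fin 5 → ZMod 2) → (Fin ℓ → ZMod 2)) (h : IsIndexCode GD ε) : False := by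
  classical
  have hcard : Fintype.card (Fin ℓ → ZMod 2) ≤ 4 := by
    rw [Fintype.card_fun]
    calc (Fintype.card (ZMod 2)) ^ Fintype.card (Fin ℓ) = 2 ^ ℓ := by simp
    _ ≤ 2 ^ 2 := Nat.pow_le_pow_right (by norm_num) hℓ
    _ = 4 := by norm_num
  obtain ⟨y, -, hy⟩ := Finset.exists_lt_card_fiber_of_mul_lt_card_of_maps_to
    (s := (Finset.univ : Finset (Fin 9))) (t := (Finset.univ : Finset (Fin ℓ → ZMod 2)))
    (f := fun k => ε (sv k)) (n := 2)
    (fun a _ => Finset.mem_univ _)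
    (by simpa using lt_of_le_of_lt (Nat.mul_le_mul_right 2 hcard) (by norm_num))
  rw [Finset.two_lt_card] at hy
  obtain ⟨a, ha, b, hb, c, hc, hab, hac, hbc⟩ := hy
  simp only [Finset.mem_filter] at ha hb hc
  have hfab : ε (sv a) = ε (sv b) := ha.2.trans hb.2.symm
  have hfac : ε (sv a) = ε (sv c) := ha.2.trans hc.2.symm
  have hfbc : ε (sv b) = ε (sv c) := hb.2.trans hc.2.symm
  rcases conf_triple a b c hab hac hbc with hco | hco | hco
  · exact ne_of_conf h hco hfab
  · exact ne_of_conf h hco hfac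
  · exact ne_of_conf h hco hfbc

lemma h2 : ∀ a : ZMod 2, a + a = 0 := by decide

lemma code3 : ∃ ε : (Fin 5 → ZMod 2) → (Fin 3 → ZMod 2), IsIndexCode GD ε := by
  refine ⟨fun x => ![x 0 + x 1, x 1 + x 2, x 2 + x 3 + x 4], ?_⟩
  intro i
  fin_cases i
  · refine ⟨fun c s => c 0 + s ⟨1, Or.inl rfl⟩, fun x => ?_⟩
    show (x 0 + x 1) + x 1 = x 0
    linear_combination (h2 (x 1))
  · refine ⟨fun c s => c 0 + s ⟨0, Or.inr rfl⟩, fun x => ?_⟩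
    show (x 0 + x 1) + x 0 = x 1
    linear_combination (h2 (x 0))
  · refine ⟨fun c s => c 1 + s ⟨1, Or.inr rfl⟩, fun x => ?_⟩
    show (x 1 + x 2) + x 1 = x 2
    linear_combination (h2 (x 1))
  · refine ⟨fun c s => c 2 + s ⟨2, Or.inr rfl⟩ + s ⟨4, Or.inl rfl⟩, fun x => ?_⟩
    show (x 2 + x 3 + x 4) + x 2 + x 4 = x 3
    linear_combination (h2 (x 2)) + (h2 (x 4))
  · refine ⟨fun c s => c 0 + c 1 + c 2 + s ⟨0, Or.inl rfl⟩ + s ⟨3, Or.inr rfl⟩, fun x => ?_⟩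
    show (x 0 + x 1) + (x 1 + x 2) + (x 2 + x 3 + x 4) + x 0 + x 3 = x 4
    linear_combination (h2 (x 0)) + (h2 (x 1)) + (h2 (x 2)) + (h2 (x 3))

lemma no_tg {α : Type*} {R : α → α → Prop} (h : ∀ a b, ¬ R a b) :
    ∀ i j : α, ¬ Relation.TransGen R i j := by
  intro i j hij
  induction hij with
  | single h' => exact h _ _ h'
  | tail _ h' _ => exact h _ _ h'

lemma acyc02 : AcyclicOn GD ({0, 2} : Finset (Fin 5)) := by
  intro i
  exact no_tg (by decide) i i

lemma pair_of_three : ∀ S : Finset (Fin 5), 3 ≤ S.card →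
    ∃ i ∈ S, ∃ j ∈ S, GD i j ∧ GD j i := by decide

lemma mais_bound : ∀ k ∈ {k : ℕ | ∃ S : Finset (Fin 5), S.card = k ∧ AcyclicOn GD S},
    k ≤ 2 := by
  rintro k ⟨S, hcard, hacyc⟩
  by_contra hk
  obtain ⟨i, hi, j, hj, hij, hji⟩ := pair_of_three S (by omega)
  exact hacyc i (Relation.TransGen.tail (Relation.TransGen.single ⟨hij, hi, hj⟩) ⟨hji, hj, hi⟩)

lemma mais_GD : mais GD = 2 := by
  have hmem : 2 ∈ {k : ℕ | ∃ S : Finset (Fin 5), S.card = k ∧ AcyclicOn GD S} :=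
    ⟨({0, 2} : Finset (Fin 5)), by decide, acyc02⟩
  exact le_antisymm (csSup_le ⟨2, hmem⟩ mais_bound) (le_csSup ⟨2, mais_bound⟩ hmem)

lemma optLen_GD : optLen GD = 3 := by
  have h3 : 3 ∈ {ℓ : ℕ | ∃ ε : (Fin 5 → ZMod 2) → (Fin ℓ → ZMod 2), IsIndexCode GD ε} :=
    code3
  apply le_antisymm (Nat.sInf_le h3)
  apply le_csInf ⟨3, h3⟩
  rintro ℓ ⟨ε, hε⟩
  by_contra hl
  exact no_short_code (by omega) ε hε

/-- There is a digraph on 5 vertices with `mais G = 2` and `ℓ*(G) = 3`;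
so the MAIS lower bound is not always tight on five vertices. -/
theorem stmt15 :
    ∃ G : Fin 5 → Fin 5 → Prop, (∀ i, ¬ G i i) ∧ mais G = 2 ∧ optLen G = 3 := by
  exact ⟨GD, by decide, mais_GD, optLen_GD⟩
end

section
/- Let G be a side-information digraph with exactly 5 vertices, mais(G) = 2, and exactly two edges. Then the two edges are vertex-disjoint, and ℓ*(G) = 2, achieved by a linear index code over GF(2). -/
/- ---------- auxiliary lemmas ---------- -/

lemma acyclicOn_of_rank {n : ℕ} (G : Fin n → Fin n → Prop) (S : Finset (Fin n))
    (φ : Fin n → ℤ) (h : ∀ a b, G a b → a ∈ S → b ∈ S → φ a < φ b) :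
    AcyclicOn G S := by
  intro i hi
  have key : ∀ a b, Relation.TransGen (fun a b => G a b ∧ a ∈ S ∧ b ∈ S) a b → φ a < φ b := by
    intro a b hab
    induction hab with
    | single h' => exact h _ _ h'.1 h'.2.1 h'.2.2
    | tail _ h' ih => exact ih.trans (h _ _ h'.1 h'.2.1 h'.2.2)
  exact absurd (key i i hi) (lt_irrefl _)

open Classical in
noncomputable def ind (p : Prop) : ℤ := if p then 1 else 0

lemma phi_lt (P Q R P' Q' R' : Prop) (hP : P)
    (h2 : ¬(P ∧ P')) (h2' : ¬(Q ∧ Q')) (h2'' : ¬(R ∧ R'))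
    (h3 : ¬(P ∧ Q ∧ R)) :
    2*(ind P' + ind R) - (ind P + ind R') < 2*(ind P + ind Q') - (ind P' + ind Q) := by
  classical
  by_cases hP' : P' <;> by_cases hQ : Q <;> by_cases hQ' : Q' <;>
    by_cases hR : R <;> by_cases hR' : R' <;> simp_all [ind]

lemma acyclic_triple {n : ℕ} (G : Fin n → Fin n → Prop) (hG : ∀ i, ¬ G i i)
    (u v w : Fin n) (huv : u ≠ v) (huw : u ≠ w) (hvw : v ≠ w)
    (h2uv : ¬(G u v ∧ G v u)) (h2uw : ¬(G u w ∧ G w u)) (h2vw : ¬(G v w ∧ G w v))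
    (h3 : ¬(G u v ∧ G v w ∧ G w u)) (h3' : ¬(G u w ∧ G w v ∧ G v u)) :
    AcyclicOn G {u, v, w} := by
  classical
  apply acyclicOn_of_rank G _ (fun x =>
    if x = u then 2*(ind (G v u) + ind (G w u)) - (ind (G u v) + ind (G u w))
    else if x = v then 2*(ind (G u v) + ind (G w v)) - (ind (G v u) + ind (G v w))
    else 2*(ind (G u w) + ind (G v w)) - (ind (G w u) + ind (G w v)))
  intro a b hab ha hb
  simp only [Finset.mem_insert, Finset.mem_singleton] at ha hb
  rcases ha with ha | ha | ha <;> rcases hb with hb | hb | hb <;>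
    rw [ha, hb] at hab ⊢ <;>
    simp only [if_pos rfl, if_neg huv, if_neg huw, if_neg hvw,
      if_neg huv.symm, if_neg huw.symm, if_neg hvw.symm, eq_self_iff_true, if_true]
  · exact absurd hab (hG _)
  · have := phi_lt (G u v) (G v w) (G w u) (G v u) (G w v) (G u w) hab h2uv h2vw
      (fun h => h2uw ⟨h.2, h.1⟩) h3
    linarith
  · have := phi_lt (G u w) (G w v) (G v u) (G w u) (G v w) (G u v) hab h2uw
      (fun h => h2vw ⟨h.2, h.1⟩) (fun h => h2uv ⟨h.2, h.1⟩) h3'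
    linarith
  · have := phi_lt (G v u) (G u w) (G w v) (G u v) (G w u) (G v w) hab
      (fun h => h2uv ⟨h.2, h.1⟩) h2uw (fun h => h2vw ⟨h.2, h.1⟩)
      (fun h => h3' ⟨h.2.1, h.2.2, h.1⟩)
    linarith
  · exact absurd hab (hG _)
  · have := phi_lt (G v w) (G w u) (G u v) (G w v) (G u w) (G v u) hab h2vw
      (fun h => h2uw ⟨h.2, h.1⟩) h2uv (fun h => h3 ⟨h.2.2, h.1, h.2.1⟩)
    linarith
  · have := phi_lt (G w u) (G u v) (G v w) (G u w) (G v u) (G w v) hab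
      (fun h => h2uw ⟨h.2, h.1⟩) h2uv h2vw (fun h => h3 ⟨h.2.1, h.2.2, h.1⟩)
    linarith
  · have := phi_lt (G w v) (G v u) (G u w) (G v w) (G u v) (G w u) hab
      (fun h => h2vw ⟨h.2, h.1⟩) (fun h => h2uv ⟨h.2, h.1⟩) h2uw
      (fun h => h3' ⟨h.2.2, h.1, h.2.1⟩)
    linarith
  · exact absurd hab (hG _)

lemma lb {ℓ : ℕ} (G : Fin 5 → Fin 5 → Prop) (hG : ∀ i, ¬ G i i)
    (i j : Fin 5) (hij : i ≠ j) (hnG : ¬ G i j)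
    (ε : (Fin 5 → ZMod 2) → (Fin ℓ → ZMod 2)) (h : IsIndexCode G ε) : 2 ≤ ℓ := by
  classical
  set x : ZMod 2 × ZMod 2 → (Fin 5 → ZMod 2) :=
    fun p k => if k = i then p.1 else if k = j then p.2 else 0 with hx
  have hinj : Function.Injective (fun p => ε (x p)) := by
    intro p q hpq
    simp only at hpq
    obtain ⟨δi, hδi⟩ := h i
    obtain ⟨δj, hδj⟩ := h j
    have h1 : p.1 = q.1 := by
      have e1 := hδi (x p)
      have e2 := hδi (x q)
      have hside : (fun k : {k // G i k} => x p k.1) = (fun k => x q k.1) := by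
        funext k
        have hki : k.1 ≠ i := by intro hk; have := k.2; rw [hk] at this; exact hG i this
        have hkj : k.1 ≠ j := by intro hk; have := k.2; rw [hk] at this; exact hnG this
        simp [hx, hki, hkj]
      rw [hpq, hside] at e1
      have : x p i = x q i := by rw [← e1, e2]
      simpa [hx] using this
    have h2 : p.2 = q.2 := by
      have e1 := hδj (x p)
      have e2 := hδj (x q)
      have hside : (fun k : {k // G j k} => x p k.1) = (fun k => x q k.1) := by
        funext k
        have hkj : k.1 ≠ j := by intro hk; have := k.2; rw [hk] at this; exact hG j this
        by_cases hki : k.1 = i <;> simp [hx, hki, hkj, h1]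
      rw [hpq, hside] at e1
      have : x p j = x q j := by rw [← e1, e2]
      simpa [hx, hij.symm] using this
    exact Prod.ext h1 h2
  have hcard := Fintype.card_le_of_injective _ hinj
  simp only [Fintype.card_prod, ZMod.card, Fintype.card_fun, Fintype.card_fin] at hcard
  by_contra hl
  interval_cases ℓ <;> norm_num at hcard

lemma z1 : ∀ u v w : ZMod 2, u+v+w+v+w = u := by decide
lemma z2 : ∀ u v w : ZMod 2, u+v+w+u+w = v := by decide
lemma z3 : ∀ u v w : ZMod 2, u+v+w+u+v = w := by decide
lemma z6 : ∀ u v w p q : ZMod 2, (u+v+w)+(p+q+w)+u+v+q = p := by decide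
lemma z7 : ∀ u v w p q : ZMod 2, (u+v+w)+(p+q+w)+u+v+p = q := by decide

lemma code_exists (G : Fin 5 → Fin 5 → Prop) (a b c d f : Fin 5)
    (hcover : ∀ i : Fin 5, i = a ∨ i = b ∨ i = c ∨ i = d ∨ i = f)
    (hab : G a b) (hba : G b a) (hcd : G c d) (hdc : G d c)
    (haf : G a f) (hbf : G b f) (hca : G c a) (hcb : G c b)
    (hda : G d a) (hdb : G d b) (hfc : G f c) (hfd : G f d) :
    ∃ ε : (Fin 5 → ZMod 2) → (Fin 2 → ZMod 2),
      IsLinearMap (ZMod 2) ε ∧ IsIndexCode G ε := by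
  refine ⟨fun x => ![x a + x b + x f, x c + x d + x f], ⟨?_, ?_⟩, ?_⟩
  · intro x y; funext t; fin_cases t <;> simp <;> ring
  · intro r x; funext t; fin_cases t <;> simp <;> ring
  · intro i
    rcases hcover i with rfl | rfl | rfl | rfl | rfl
    · exact ⟨fun y kn => y 0 + kn ⟨b, hab⟩ + kn ⟨f, haf⟩, fun x => by
        simp only [Matrix.cons_val_zero]; exact z1 _ _ _⟩
    · exact ⟨fun y kn => y 0 + kn ⟨a, hba⟩ + kn ⟨f, hbf⟩, fun x => by
        simp only [Matrix.cons_val_zero]; exact z2 _ _ _⟩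
    · exact ⟨fun y kn => y 0 + y 1 + kn ⟨a, hca⟩ + kn ⟨b, hcb⟩ + kn ⟨d, hcd⟩, fun x => by
        simp only [Matrix.cons_val_zero, Matrix.cons_val_one, Matrix.head_cons]
        exact z6 _ _ _ _ _⟩
    · exact ⟨fun y kn => y 0 + y 1 + kn ⟨a, hda⟩ + kn ⟨b, hdb⟩ + kn ⟨c, hdc⟩, fun x => by
        simp only [Matrix.cons_val_zero, Matrix.cons_val_one, Matrix.head_cons]
        exact z7 _ _ _ _ _⟩
    · exact ⟨fun y kn => y 1 + kn ⟨c, hfc⟩ + kn ⟨d, hfd⟩, fun x => by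
        simp only [Matrix.cons_val_one, Matrix.head_cons]; exact z3 _ _ _⟩

/-- Five vertices, `mais G = 2`, and exactly two edges: the two edges are
vertex-disjoint, and `ℓ*(G) = 2`, achieved by a linear index code. -/
theorem stmt18 (G : Fin 5 → Fin 5 → Prop) (hG : ∀ i, ¬ G i i) (hm : mais G = 2)
    (he : (edgeSet G).ncard = 2) :
    (∀ e₁ ∈ edgeSet G, ∀ e₂ ∈ edgeSet G, e₁ ≠ e₂ → Disjoint e₁ e₂) ∧
    optLen G = 2 ∧
    ∃ ε : (Fin 5 → ZMod 2) → (Fin 2 → ZMod 2),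
      IsLinearMap (ZMod 2) ε ∧ IsIndexCode G ε := by
  classical
  have hbdd : BddAbove {k : ℕ | ∃ S : Finset (Fin 5), S.card = k ∧ AcyclicOn G S} := by
    refine ⟨5, ?_⟩
    rintro k ⟨S, rfl, -⟩
    simpa using Finset.card_le_univ S
  have hne : Set.Nonempty {k : ℕ | ∃ S : Finset (Fin 5), S.card = k ∧ AcyclicOn G S} :=
    ⟨0, ∅, rfl, acyclicOn_of_rank G ∅ 0 (fun a b _ h _ => absurd h (by simp))⟩
  have hno3 : ∀ S : Finset (Fin 5), AcyclicOn G S → S.card ≠ 3 := by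
    intro S hA h3
    have : 3 ≤ mais G := le_csSup hbdd ⟨S, h3, hA⟩
    omega
  have tri : ∀ u v w : Fin 5, u ≠ v → u ≠ w → v ≠ w →
      ¬(G u v ∧ G v u) → ¬(G u w ∧ G w u) → ¬(G v w ∧ G w v) →
      (G u v ∧ G v w ∧ G w u) ∨ (G u w ∧ G w v ∧ G v u) := by
    intro u v w huv huw hvw n1 n2 n3
    by_contra hcon
    rcases not_or.mp hcon with ⟨h3, h3'⟩
    exact hno3 {u, v, w} (acyclic_triple G hG u v w huv huw hvw n1 n2 n3 h3 h3')
      (Finset.card_eq_three.mpr ⟨u, v, w, huv, huw, hvw, rfl⟩)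
  -- the two edges
  obtain ⟨E₁, E₂, hE12, hEset⟩ := Set.ncard_eq_two.mp he
  have hE1 : E₁ ∈ edgeSet G := by rw [hEset]; exact Set.mem_insert _ _
  have hE2 : E₂ ∈ edgeSet G := by rw [hEset]; exact Set.mem_insert_iff.mpr (Or.inr rfl)
  obtain ⟨a, b, hab0, hGab, hGba, rfl⟩ := hE1
  obtain ⟨c, d, hcd0, hGcd, hGdc, rfl⟩ := hE2
  have hedge : ∀ p q : Fin 5, G p q → G q p →
      ({p, q} : Finset (Fin 5)) = {a, b} ∨ ({p, q} : Finset (Fin 5)) = {c, d} := by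
    intro p q h1 h2
    have hpq : p ≠ q := by rintro rfl; exact hG p h1
    have hmem : ({p, q} : Finset (Fin 5)) ∈ edgeSet G := ⟨p, q, hpq, h1, h2, rfl⟩
    rw [hEset] at hmem
    exact hmem
  -- a vertex meeting all edges leads to a contradiction
  have tourn : ∀ s : Fin 5, (∀ x y : Fin 5, x ≠ s → y ≠ s → ¬(G x y ∧ G y x)) → False := by
    intro s hno2
    have hcount : (Finset.univ.erase s).card = 4 := by
      rw [Finset.card_erase_of_mem (Finset.mem_univ s)]; simp
    obtain ⟨p, hp⟩ := Finset.card_pos.mp (by rw [hcount]; norm_num :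
      0 < (Finset.univ.erase s).card)
    have h3c : ((Finset.univ.erase s).erase p).card = 3 := by
      rw [Finset.card_erase_of_mem hp, hcount]
    obtain ⟨q, hq⟩ := Finset.card_pos.mp (by rw [h3c]; norm_num :
      0 < ((Finset.univ.erase s).erase p).card)
    have h2c : (((Finset.univ.erase s).erase p).erase q).card = 2 := by
      rw [Finset.card_erase_of_mem hq, h3c]
    obtain ⟨r, hr⟩ := Finset.card_pos.mp (by rw [h2c]; norm_num :
      0 < (((Finset.univ.erase s).erase p).erase q).card)
    have hps : p ≠ s := (Finset.mem_erase.mp hp).1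
    have hqp : q ≠ p := (Finset.mem_erase.mp hq).1
    have hqs : q ≠ s := (Finset.mem_erase.mp (Finset.mem_erase.mp hq).2).1
    have hrq : r ≠ q := (Finset.mem_erase.mp hr).1
    have hrp : r ≠ p := (Finset.mem_erase.mp (Finset.mem_erase.mp hr).2).1
    have hrs : r ≠ s :=
      (Finset.mem_erase.mp (Finset.mem_erase.mp (Finset.mem_erase.mp hr).2).2).1
    have h1c : ((((Finset.univ.erase s).erase p).erase q).erase r).card = 1 := by
      rw [Finset.card_erase_of_mem hr, h2c]
    obtain ⟨t, ht⟩ := Finset.card_pos.mp (by rw [h1c]; norm_num :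
      0 < ((((Finset.univ.erase s).erase p).erase q).erase r).card)
    have htr : t ≠ r := (Finset.mem_erase.mp ht).1
    have htq : t ≠ q := (Finset.mem_erase.mp (Finset.mem_erase.mp ht).2).1
    have htp : t ≠ p :=
      (Finset.mem_erase.mp (Finset.mem_erase.mp (Finset.mem_erase.mp ht).2).2).1
    have hts : t ≠ s := (Finset.mem_erase.mp
      (Finset.mem_erase.mp (Finset.mem_erase.mp (Finset.mem_erase.mp ht).2).2).2).1
    have x1 : (G p q ∧ ¬ G p r) ∨ (G p r ∧ ¬ G p q) := by
      rcases tri p q r hqp.symm hrp.symm hrq.symm (hno2 p q hps hqs) (hno2 p r hps hrs)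
          (hno2 q r hqs hrs) with ⟨h1, _, h3⟩ | ⟨h1, _, h3⟩
      · exact Or.inl ⟨h1, fun hx => hno2 p r hps hrs ⟨hx, h3⟩⟩
      · exact Or.inr ⟨h1, fun hx => hno2 p q hps hqs ⟨hx, h3⟩⟩
    have x2 : (G p q ∧ ¬ G p t) ∨ (G p t ∧ ¬ G p q) := by
      rcases tri p q t hqp.symm htp.symm htq.symm (hno2 p q hps hqs) (hno2 p t hps hts)
          (hno2 q t hqs hts) with ⟨h1, _, h3⟩ | ⟨h1, _, h3⟩
      · exact Or.inl ⟨h1, fun hx => hno2 p t hps hts ⟨hx, h3⟩⟩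
      · exact Or.inr ⟨h1, fun hx => hno2 p q hps hqs ⟨hx, h3⟩⟩
    have x3 : (G p r ∧ ¬ G p t) ∨ (G p t ∧ ¬ G p r) := by
      rcases tri p r t hrp.symm htp.symm htr.symm (hno2 p r hps hrs) (hno2 p t hps hts)
          (hno2 r t hrs hts) with ⟨h1, _, h3⟩ | ⟨h1, _, h3⟩
      · exact Or.inl ⟨h1, fun hx => hno2 p t hps hts ⟨hx, h3⟩⟩
      · exact Or.inr ⟨h1, fun hx => hno2 p r hps hrs ⟨hx, h3⟩⟩
    tauto
  -- the two edges are disjoint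
  have hdisj : Disjoint ({a, b} : Finset (Fin 5)) {c, d} := by
    by_contra hnd
    obtain ⟨x, hx1, hx2⟩ := Finset.not_disjoint_iff.mp hnd
    apply tourn x
    intro y z hy hz hyz
    rcases hedge y z hyz.1 hyz.2 with h | h
    · rw [← h] at hx1
      simp only [Finset.mem_insert, Finset.mem_singleton] at hx1
      rcases hx1 with rfl | rfl
      · exact hy rfl
      · exact hz rfl
    · rw [← h] at hx2
      simp only [Finset.mem_insert, Finset.mem_singleton] at hx2
      rcases hx2 with rfl | rfl
      · exact hy rfl
      · exact hz rfl
  have part1 : ∀ e₁ ∈ edgeSet G, ∀ e₂ ∈ edgeSet G, e₁ ≠ e₂ → Disjoint e₁ e₂ := by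
    intro e₁ h1 e₂ h2 hne12
    rw [hEset] at h1 h2
    simp only [Set.mem_insert_iff, Set.mem_singleton_iff] at h1 h2
    rcases h1 with rfl | rfl <;> rcases h2 with rfl | rfl
    · exact absurd rfl hne12
    · exact hdisj
    · exact hdisj.symm
    · exact absurd rfl hne12
  -- distinctness
  have hac : a ≠ c := by
    intro h
    exact Finset.disjoint_left.mp hdisj (show a ∈ ({a,b}:Finset (Fin 5)) by simp)
      (show a ∈ ({c,d}:Finset (Fin 5)) by rw [h]; simp)
  have had : a ≠ d := by
    intro h
    exact Finset.disjoint_left.mp hdisj (show a ∈ ({a,b}:Finset (Fin 5)) by simp)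
      (show a ∈ ({c,d}:Finset (Fin 5)) by rw [h]; simp)
  have hbc : b ≠ c := by
    intro h
    exact Finset.disjoint_left.mp hdisj (show b ∈ ({a,b}:Finset (Fin 5)) by simp)
      (show b ∈ ({c,d}:Finset (Fin 5)) by rw [h]; simp)
  have hbd : b ≠ d := by
    intro h
    exact Finset.disjoint_left.mp hdisj (show b ∈ ({a,b}:Finset (Fin 5)) by simp)
      (show b ∈ ({c,d}:Finset (Fin 5)) by rw [h]; simp)
  -- the fifth vertex
  have h4 : ({a, b, c, d} : Finset (Fin 5)).card = 4 := by
    rw [Finset.card_insert_of_notMem (by simp [hab0, hac, had]),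
      Finset.card_insert_of_notMem (by simp [hbc, hbd]),
      Finset.card_insert_of_notMem (by simp [hcd0]), Finset.card_singleton]
  obtain ⟨f, hf⟩ := Finset.card_eq_one.mp
    (by rw [Finset.card_sdiff_of_subset (Finset.subset_univ _), h4]; simp :
      ((Finset.univ \ {a, b, c, d}) : Finset (Fin 5)).card = 1)
  have hfmem : f ∈ (Finset.univ \ {a, b, c, d} : Finset (Fin 5)) := by
    rw [hf]; exact Finset.mem_singleton_self f
  simp only [Finset.mem_sdiff, Finset.mem_univ, true_and, Finset.mem_insert,
    Finset.mem_singleton, not_or] at hfmem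
  obtain ⟨hfa, hfb, hfc0, hfd0⟩ := hfmem
  have hcover : ∀ i : Fin 5, i = a ∨ i = b ∨ i = c ∨ i = d ∨ i = f := by
    intro i
    by_cases h : i = a ∨ i = b ∨ i = c ∨ i = d
    · tauto
    · push_neg at h
      have : i ∈ (Finset.univ \ {a, b, c, d} : Finset (Fin 5)) := by
        simp [h.1, h.2.1, h.2.2.1, h.2.2.2]
      rw [hf] at this
      simp only [Finset.mem_singleton] at this
      tauto
  -- no 2-cycles outside the two edges
  have no2 : ∀ x y : Fin 5, x ≠ y →
      ¬(x ∈ ({a, b} : Finset (Fin 5)) ∧ y ∈ ({a, b} : Finset (Fin 5))) →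
      ¬(x ∈ ({c, d} : Finset (Fin 5)) ∧ y ∈ ({c, d} : Finset (Fin 5))) →
      ¬(G x y ∧ G y x) := by
    intro x y hxy m1 m2 hcyc
    rcases hedge x y hcyc.1 hcyc.2 with h | h
    · exact m1 ⟨by rw [← h]; simp, by rw [← h]; simp⟩
    · exact m2 ⟨by rw [← h]; simp, by rw [← h]; simp⟩
  have nfa : ¬(G f a ∧ G a f) := no2 f a hfa (by simp [hfa, hfb]) (by simp [hfc0, hfd0])
  have nfb : ¬(G f b ∧ G b f) := no2 f b hfb (by simp [hfa, hfb]) (by simp [hfc0, hfd0])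
  have nfc : ¬(G f c ∧ G c f) := no2 f c hfc0 (by simp [hfa, hfb]) (by simp [hfc0, hfd0])
  have nfd : ¬(G f d ∧ G d f) := no2 f d hfd0 (by simp [hfa, hfb]) (by simp [hfc0, hfd0])
  have nac : ¬(G a c ∧ G c a) := no2 a c hac (by simp [hac, hbc, hac.symm, hbc.symm])
    (by simp [hac, had, hac.symm, had.symm])
  have nad : ¬(G a d ∧ G d a) := no2 a d had (by simp [had, hbd, had.symm, hbd.symm])
    (by simp [hac, had, hac.symm, had.symm])
  have nbc : ¬(G b c ∧ G c b) := no2 b c hbc (by simp [hac, hbc, hac.symm, hbc.symm])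
    (by simp [hbc, hbd, hbc.symm, hbd.symm])
  have nbd : ¬(G b d ∧ G d b) := no2 b d hbd (by simp [had, hbd, had.symm, hbd.symm])
    (by simp [hbc, hbd, hbc.symm, hbd.symm])
  -- the four forced 3-cycles through f
  have T1 := tri f a c hfa hfc0 hac nfa nfc nac
  have T2 := tri f a d hfa hfd0 had nfa nfd nad
  have T3 := tri f b c hfb hfc0 hbc nfb nfc nbc
  have T4 := tri f b d hfb hfd0 hbd nfb nfd nbd
  -- the linear index code
  have hcode : ∃ ε : (Fin 5 → ZMod 2) → (Fin 2 → ZMod 2),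
      IsLinearMap (ZMod 2) ε ∧ IsIndexCode G ε := by
    by_cases hGfa : G f a
    · -- f knows a and b
      have A1 : G a c ∧ G c f := by
        rcases T1 with ⟨_, h2, h3⟩ | ⟨_, _, h3⟩
        · exact ⟨h2, h3⟩
        · exact absurd ⟨hGfa, h3⟩ nfa
      have A2 : G a d ∧ G d f := by
        rcases T2 with ⟨_, h2, h3⟩ | ⟨_, _, h3⟩
        · exact ⟨h2, h3⟩
        · exact absurd ⟨hGfa, h3⟩ nfa
      have A3 : G f b ∧ G b c := by
        rcases T3 with ⟨h1, h2, _⟩ | ⟨h1, _, _⟩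
        · exact ⟨h1, h2⟩
        · exact absurd ⟨h1, A1.2⟩ nfc
      have A4 : G f b ∧ G b d := by
        rcases T4 with ⟨h1, h2, _⟩ | ⟨h1, _, _⟩
        · exact ⟨h1, h2⟩
        · exact absurd ⟨h1, A2.2⟩ nfd
      have hcover' : ∀ i : Fin 5, i = c ∨ i = d ∨ i = a ∨ i = b ∨ i = f := by
        intro i
        rcases hcover i with h | h | h | h | h
        · exact Or.inr (Or.inr (Or.inl h))
        · exact Or.inr (Or.inr (Or.inr (Or.inl h)))
        · exact Or.inl h
        · exact Or.inr (Or.inl h)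
        · exact Or.inr (Or.inr (Or.inr (Or.inr h)))
      exact code_exists G c d a b f hcover'
        hGcd hGdc hGab hGba A1.2 A2.2 A1.1 A2.1 A3.2 A4.2 hGfa A3.1
    · -- f knows c and d
      have B1 : G f c ∧ G c a ∧ G a f := by
        rcases T1 with ⟨h1, _, _⟩ | h
        · exact absurd h1 hGfa
        · exact h
      have B2 : G f d ∧ G d a ∧ G a f := by
        rcases T2 with ⟨h1, _, _⟩ | h
        · exact absurd h1 hGfa
        · exact h
      have B3 : G c b ∧ G b f := by
        rcases T3 with ⟨_, _, h3⟩ | ⟨_, h2, h3⟩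
        · exact absurd ⟨B1.1, h3⟩ nfc
        · exact ⟨h2, h3⟩
      have B4 : G d b ∧ G b f := by
        rcases T4 with ⟨_, _, h3⟩ | ⟨_, h2, h3⟩
        · exact absurd ⟨B2.1, h3⟩ nfd
        · exact ⟨h2, h3⟩
      exact code_exists G a b c d f hcover hGab hGba hGcd hGdc B1.2.2 B3.2 B1.2.1 B3.1
        B2.2.1 B4.1 B1.1 B2.1
  obtain ⟨ε, hlin, hic⟩ := hcode
  -- lower bound: an acyclic pair exists
  have h2mem : 2 ∈ {k : ℕ | ∃ S : Finset (Fin 5), S.card = k ∧ AcyclicOn G S} := by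
    rw [← hm]; exact Nat.sSup_mem hne hbdd
  obtain ⟨S, hS2, hSa⟩ := h2mem
  obtain ⟨i, j, hij, rfl⟩ := Finset.card_eq_two.mp hS2
  have hn2 : ¬(G i j ∧ G j i) := by
    rintro ⟨h1, h2⟩
    exact hSa i (Relation.TransGen.head ⟨h1, by simp, by simp⟩
      (Relation.TransGen.single ⟨h2, by simp, by simp⟩))
  have hmem2 : 2 ∈ {ℓ : ℕ | ∃ ε' : (Fin 5 → ZMod 2) → (Fin 2 → ZMod 2), IsIndexCode G ε'} :=
    ⟨ε, hic⟩
  have hlow : ∀ ℓ' ∈ {ℓ : ℕ | ∃ ε' : (Fin 5 → ZMod 2) → (Fin ℓ → ZMod 2), IsIndexCode G ε'},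
      2 ≤ ℓ' := by
    rintro ℓ' ⟨ε', hc⟩
    rcases not_and_or.mp hn2 with h | h
    · exact lb G hG i j hij h ε' hc
    · exact lb G hG j i hij.symm h ε' hc
  have hopt : optLen G = 2 :=
    le_antisymm (Nat.sInf_le hmem2) (le_csInf ⟨2, hmem2⟩ hlow)
  exact ⟨part1, hopt, ε, hlin, hic⟩
end

section
/- Let G be a side-information digraph with exactly 5 vertices, mais(G) = 2, exactly three edges, and no undirected cycle. Then ℓ*(G) = 2, achieved by a linear index code over GF(2). -/
lemma rank_noCycle {α : Type*} [DecidableEq α] (r : α → α → Prop) (x y z : α)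
    (hmem : ∀ a b, r a b → (a = x ∨ a = y ∨ a = z) ∧ (b = x ∨ b = y ∨ b = z))
    (dxy : x ≠ y) (dxz : x ≠ z) (dyz : y ≠ z)
    (nx ny nz : ℕ)
    (hxx : ¬ r x x) (hyy : ¬ r y y) (hzz : ¬ r z z)
    (hxy : r x y → nx < ny) (hyx : r y x → ny < nx)
    (hxz : r x z → nx < nz) (hzx : r z x → nz < nx)
    (hyz : r y z → ny < nz) (hzy : r z y → nz < ny)
    (i : α) : ¬ Relation.TransGen r i i := by
  set f : α → ℕ := fun a => if a = x then nx else if a = y then ny else nz with hf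
  have fx : f x = nx := by simp [hf]
  have fy : f y = ny := by simp [hf, Ne.symm dxy]
  have fz : f z = nz := by simp [hf, Ne.symm dxz, Ne.symm dyz]
  have base : ∀ a b, r a b → f a < f b := by
    intro a b h
    obtain ⟨ha, hb⟩ := hmem a b h
    rcases ha with rfl | rfl | rfl <;> rcases hb with rfl | rfl | rfl <;>
      simp only [fx, fy, fz] <;>
      first
        | exact absurd h hxx | exact absurd h hyy | exact absurd h hzz
        | exact hxy h | exact hyx h | exact hxz h | exact hzx h | exact hyz h | exact hzy h
  have key : ∀ a b, Relation.TransGen r a b → f a < f b := by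
    intro a b h
    induction h with
    | single h => exact base _ _ h
    | tail _ h ih => exact ih.trans (base _ _ h)
  exact fun h => lt_irrefl _ (key i i h)

lemma cycle3 {α : Type*} [DecidableEq α] (r : α → α → Prop) (x y z : α)
    (hmem : ∀ a b, r a b → (a = x ∨ a = y ∨ a = z) ∧ (b = x ∨ b = y ∨ b = z))
    (dxy : x ≠ y) (dxz : x ≠ z) (dyz : y ≠ z)
    (hxx : ¬ r x x) (hyy : ¬ r y y) (hzz : ¬ r z z)
    (no2xy : ¬ (r x y ∧ r y x)) (no2xz : ¬ (r x z ∧ r z x)) (no2yz : ¬ (r y z ∧ r z y))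
    (i : α) (hcyc : Relation.TransGen r i i) :
    (r x y ∧ r y z ∧ r z x) ∨ (r x z ∧ r z y ∧ r y x) := by
  by_contra hcon
  rw [not_or] at hcon
  obtain ⟨hconA, hconB⟩ := hcon
  by_cases p1 : r x y
  · by_cases p2 : r y x
    · by_cases p3 : r x z
      · by_cases p4 : r z x
        · by_cases p5 : r y z
          · by_cases p6 : r z y
            · exact no2xy ⟨p1, p2⟩
            · exact no2xy ⟨p1, p2⟩
          · by_cases p6 : r z y
            · exact no2xy ⟨p1, p2⟩
            · exact no2xy ⟨p1, p2⟩
        · by_cases p5 : r y z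
          · by_cases p6 : r z y
            · exact no2xy ⟨p1, p2⟩
            · exact no2xy ⟨p1, p2⟩
          · by_cases p6 : r z y
            · exact no2xy ⟨p1, p2⟩
            · exact no2xy ⟨p1, p2⟩
      · by_cases p4 : r z x
        · by_cases p5 : r y z
          · by_cases p6 : r z y
            · exact no2xy ⟨p1, p2⟩
            · exact no2xy ⟨p1, p2⟩
          · by_cases p6 : r z y
            · exact no2xy ⟨p1, p2⟩
            · exact no2xy ⟨p1, p2⟩
        · by_cases p5 : r y z
          · by_cases p6 : r z y
            · exact no2xy ⟨p1, p2⟩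
            · exact no2xy ⟨p1, p2⟩
          · by_cases p6 : r z y
            · exact no2xy ⟨p1, p2⟩
            · exact no2xy ⟨p1, p2⟩
    · by_cases p3 : r x z
      · by_cases p4 : r z x
        · by_cases p5 : r y z
          · by_cases p6 : r z y
            · exact no2xz ⟨p3, p4⟩
            · exact no2xz ⟨p3, p4⟩
          · by_cases p6 : r z y
            · exact no2xz ⟨p3, p4⟩
            · exact no2xz ⟨p3, p4⟩
        · by_cases p5 : r y z
          · by_cases p6 : r z y
            · exact no2yz ⟨p5, p6⟩
            · exact rank_noCycle r x y z hmem dxy dxz dyz 0 1 2 hxx hyy hzz (fun _ => by decide) (fun h => absurd h p2) (fun _ => by decide) (fun h => absurd h p4) (fun _ => by decide) (fun h => absurd h p6) i hcyc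
          · by_cases p6 : r z y
            · exact rank_noCycle r x y z hmem dxy dxz dyz 0 2 1 hxx hyy hzz (fun _ => by decide) (fun h => absurd h p2) (fun _ => by decide) (fun h => absurd h p4) (fun h => absurd h p5) (fun _ => by decide) i hcyc
            · exact rank_noCycle r x y z hmem dxy dxz dyz 0 1 1 hxx hyy hzz (fun _ => by decide) (fun h => absurd h p2) (fun _ => by decide) (fun h => absurd h p4) (fun h => absurd h p5) (fun h => absurd h p6) i hcyc
      · by_cases p4 : r z x
        · by_cases p5 : r y z
          · by_cases p6 : r z y
            · exact no2yz ⟨p5, p6⟩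
            · exact hconA ⟨p1, p5, p4⟩
          · by_cases p6 : r z y
            · exact rank_noCycle r x y z hmem dxy dxz dyz 1 2 0 hxx hyy hzz (fun _ => by decide) (fun h => absurd h p2) (fun h => absurd h p3) (fun _ => by decide) (fun h => absurd h p5) (fun _ => by decide) i hcyc
            · exact rank_noCycle r x y z hmem dxy dxz dyz 1 2 0 hxx hyy hzz (fun _ => by decide) (fun h => absurd h p2) (fun h => absurd h p3) (fun _ => by decide) (fun h => absurd h p5) (fun h => absurd h p6) i hcyc
        · by_cases p5 : r y z
          · by_cases p6 : r z y
            · exact no2yz ⟨p5, p6⟩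
            · exact rank_noCycle r x y z hmem dxy dxz dyz 0 1 2 hxx hyy hzz (fun _ => by decide) (fun h => absurd h p2) (fun h => absurd h p3) (fun h => absurd h p4) (fun _ => by decide) (fun h => absurd h p6) i hcyc
          · by_cases p6 : r z y
            · exact rank_noCycle r x y z hmem dxy dxz dyz 0 1 0 hxx hyy hzz (fun _ => by decide) (fun h => absurd h p2) (fun h => absurd h p3) (fun h => absurd h p4) (fun h => absurd h p5) (fun _ => by decide) i hcyc
            · exact rank_noCycle r x y z hmem dxy dxz dyz 0 1 0 hxx hyy hzz (fun _ => by decide) (fun h => absurd h p2) (fun h => absurd h p3) (fun h => absurd h p4) (fun h => absurd h p5) (fun h => absurd h p6) i hcyc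
  · by_cases p2 : r y x
    · by_cases p3 : r x z
      · by_cases p4 : r z x
        · by_cases p5 : r y z
          · by_cases p6 : r z y
            · exact no2xz ⟨p3, p4⟩
            · exact no2xz ⟨p3, p4⟩
          · by_cases p6 : r z y
            · exact no2xz ⟨p3, p4⟩
            · exact no2xz ⟨p3, p4⟩
        · by_cases p5 : r y z
          · by_cases p6 : r z y
            · exact no2yz ⟨p5, p6⟩
            · exact rank_noCycle r x y z hmem dxy dxz dyz 1 0 2 hxx hyy hzz (fun h => absurd h p1) (fun _ => by decide) (fun _ => by decide) (fun h => absurd h p4) (fun _ => by decide) (fun h => absurd h p6) i hcyc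
          · by_cases p6 : r z y
            · exact hconB ⟨p3, p6, p2⟩
            · exact rank_noCycle r x y z hmem dxy dxz dyz 1 0 2 hxx hyy hzz (fun h => absurd h p1) (fun _ => by decide) (fun _ => by decide) (fun h => absurd h p4) (fun h => absurd h p5) (fun h => absurd h p6) i hcyc
      · by_cases p4 : r z x
        · by_cases p5 : r y z
          · by_cases p6 : r z y
            · exact no2yz ⟨p5, p6⟩
            · exact rank_noCycle r x y z hmem dxy dxz dyz 2 0 1 hxx hyy hzz (fun h => absurd h p1) (fun _ => by decide) (fun h => absurd h p3) (fun _ => by decide) (fun _ => by decide) (fun h => absurd h p6) i hcyc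
          · by_cases p6 : r z y
            · exact rank_noCycle r x y z hmem dxy dxz dyz 2 1 0 hxx hyy hzz (fun h => absurd h p1) (fun _ => by decide) (fun h => absurd h p3) (fun _ => by decide) (fun h => absurd h p5) (fun _ => by decide) i hcyc
            · exact rank_noCycle r x y z hmem dxy dxz dyz 1 0 0 hxx hyy hzz (fun h => absurd h p1) (fun _ => by decide) (fun h => absurd h p3) (fun _ => by decide) (fun h => absurd h p5) (fun h => absurd h p6) i hcyc
        · by_cases p5 : r y z
          · by_cases p6 : r z y
            · exact no2yz ⟨p5, p6⟩
            · exact rank_noCycle r x y z hmem dxy dxz dyz 1 0 1 hxx hyy hzz (fun h => absurd h p1) (fun _ => by decide) (fun h => absurd h p3) (fun h => absurd h p4) (fun _ => by decide) (fun h => absurd h p6) i hcyc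
          · by_cases p6 : r z y
            · exact rank_noCycle r x y z hmem dxy dxz dyz 2 1 0 hxx hyy hzz (fun h => absurd h p1) (fun _ => by decide) (fun h => absurd h p3) (fun h => absurd h p4) (fun h => absurd h p5) (fun _ => by decide) i hcyc
            · exact rank_noCycle r x y z hmem dxy dxz dyz 1 0 0 hxx hyy hzz (fun h => absurd h p1) (fun _ => by decide) (fun h => absurd h p3) (fun h => absurd h p4) (fun h => absurd h p5) (fun h => absurd h p6) i hcyc
    · by_cases p3 : r x z
      · by_cases p4 : r z x
        · by_cases p5 : r y z
          · by_cases p6 : r z y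
            · exact no2xz ⟨p3, p4⟩
            · exact no2xz ⟨p3, p4⟩
          · by_cases p6 : r z y
            · exact no2xz ⟨p3, p4⟩
            · exact no2xz ⟨p3, p4⟩
        · by_cases p5 : r y z
          · by_cases p6 : r z y
            · exact no2yz ⟨p5, p6⟩
            · exact rank_noCycle r x y z hmem dxy dxz dyz 0 0 1 hxx hyy hzz (fun h => absurd h p1) (fun h => absurd h p2) (fun _ => by decide) (fun h => absurd h p4) (fun _ => by decide) (fun h => absurd h p6) i hcyc
          · by_cases p6 : r z y
            · exact rank_noCycle r x y z hmem dxy dxz dyz 0 2 1 hxx hyy hzz (fun h => absurd h p1) (fun h => absurd h p2) (fun _ => by decide) (fun h => absurd h p4) (fun h => absurd h p5) (fun _ => by decide) i hcyc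
            · exact rank_noCycle r x y z hmem dxy dxz dyz 0 0 1 hxx hyy hzz (fun h => absurd h p1) (fun h => absurd h p2) (fun _ => by decide) (fun h => absurd h p4) (fun h => absurd h p5) (fun h => absurd h p6) i hcyc
      · by_cases p4 : r z x
        · by_cases p5 : r y z
          · by_cases p6 : r z y
            · exact no2yz ⟨p5, p6⟩
            · exact rank_noCycle r x y z hmem dxy dxz dyz 2 0 1 hxx hyy hzz (fun h => absurd h p1) (fun h => absurd h p2) (fun h => absurd h p3) (fun _ => by decide) (fun _ => by decide) (fun h => absurd h p6) i hcyc
          · by_cases p6 : r z y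
            · exact rank_noCycle r x y z hmem dxy dxz dyz 1 1 0 hxx hyy hzz (fun h => absurd h p1) (fun h => absurd h p2) (fun h => absurd h p3) (fun _ => by decide) (fun h => absurd h p5) (fun _ => by decide) i hcyc
            · exact rank_noCycle r x y z hmem dxy dxz dyz 1 0 0 hxx hyy hzz (fun h => absurd h p1) (fun h => absurd h p2) (fun h => absurd h p3) (fun _ => by decide) (fun h => absurd h p5) (fun h => absurd h p6) i hcyc
        · by_cases p5 : r y z
          · by_cases p6 : r z y
            · exact no2yz ⟨p5, p6⟩
            · exact rank_noCycle r x y z hmem dxy dxz dyz 0 0 1 hxx hyy hzz (fun h => absurd h p1) (fun h => absurd h p2) (fun h => absurd h p3) (fun h => absurd h p4) (fun _ => by decide) (fun h => absurd h p6) i hcyc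
          · by_cases p6 : r z y
            · exact rank_noCycle r x y z hmem dxy dxz dyz 0 1 0 hxx hyy hzz (fun h => absurd h p1) (fun h => absurd h p2) (fun h => absurd h p3) (fun h => absurd h p4) (fun h => absurd h p5) (fun _ => by decide) i hcyc
            · exact rank_noCycle r x y z hmem dxy dxz dyz 0 0 0 hxx hyy hzz (fun h => absurd h p1) (fun h => absurd h p2) (fun h => absurd h p3) (fun h => absurd h p4) (fun h => absurd h p5) (fun h => absurd h p6) i hcyc
  

def dot2 (u v : Fin 2 → ZMod 2) : ZMod 2 := u 0 * v 0 + u 1 * v 1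

lemma code_of_vectors (G : Fin 5 → Fin 5 → Prop) (hG : ∀ i, ¬ G i i)
    (u w : Fin 5 → Fin 2 → ZMod 2)
    (hdiag : ∀ i, dot2 (u i) (w i) = 1)
    (hfit : ∀ i j, i ≠ j → dot2 (u i) (w j) = 1 → G i j) :
    ∃ ε : (Fin 5 → ZMod 2) → (Fin 2 → ZMod 2), IsLinearMap (ZMod 2) ε ∧ IsIndexCode G ε := by
  classical
  have h01 : ∀ v : ZMod 2, v = 0 ∨ v = 1 := by decide
  refine ⟨fun x k => ∑ j, w j k * x j, ⟨?_, ?_⟩, ?_⟩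
  · intro x y; funext k; simp [mul_add, Finset.sum_add_distrib]
  · intro c x; funext k; simp [Finset.mul_sum, mul_left_comm]
  · intro i
    refine ⟨fun c s => u i 0 * c 0 + u i 1 * c 1 +
      ∑ j : {j : Fin 5 // G i j}, dot2 (u i) (w j.1) * s j, ?_⟩
    intro x
    have hzero : ∀ j, j ≠ i → ¬ G i j → dot2 (u i) (w j) = 0 := by
      intro j hj hng
      rcases h01 (dot2 (u i) (w j)) with h | h
      · exact h
      · exact absurd (hfit i j (Ne.symm hj) h) hng
    have e1 : u i 0 * (∑ j, w j 0 * x j) + u i 1 * (∑ j, w j 1 * x j)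
        = ∑ j, dot2 (u i) (w j) * x j := by
      rw [Finset.mul_sum, Finset.mul_sum, ← Finset.sum_add_distrib]
      refine Finset.sum_congr rfl fun j _ => ?_
      simp only [dot2]; ring
    have e2 : (∑ j : {j : Fin 5 // G i j}, dot2 (u i) (w j.1) * x j.1)
        = ∑ j ∈ Finset.univ.filter (fun j => G i j), dot2 (u i) (w j) * x j := by
      exact (Finset.sum_subtype (p := fun j => G i j)
        (Finset.univ.filter (fun j => G i j)) (by simp)
        (fun j => dot2 (u i) (w j) * x j)).symm
    simp only [e1, e2]
    rw [← Finset.sum_filter_add_sum_filter_not Finset.univ (fun j => G i j)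
      (fun j => dot2 (u i) (w j) * x j)]
    have hchar : ∀ a b : ZMod 2, a + b + a = b := by decide
    rw [add_comm (∑ j ∈ Finset.univ.filter (fun j => G i j), _), add_assoc]
    have hFF : (∑ j ∈ Finset.univ.filter (fun j => G i j), dot2 (u i) (w j) * x j)
        + (∑ j ∈ Finset.univ.filter (fun j => G i j), dot2 (u i) (w j) * x j) = 0 := by
      have : ∀ a : ZMod 2, a + a = 0 := by decide
      exact this _
    rw [hFF, add_zero]
    rw [Finset.sum_eq_single i]
    · rw [hdiag i, one_mul]
    · intro b hb hbi
      rw [hzero b hbi (Finset.mem_filter.mp hb).2, zero_mul]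
    · intro hi
      exact absurd (Finset.mem_filter.mpr ⟨Finset.mem_univ i, hG i⟩) hi


lemma pickP {P Q : Prop} (h : P ∨ Q) :
    ∃ v : Fin 2 → ZMod 2, dot2 ![1,0] v = 1 ∧ (dot2 ![0,1] v = 1 → Q) ∧ (dot2 ![1,1] v = 1 → P) := by
  rcases h with h | h
  · exact ⟨![1,0], by decide, fun hc => absurd hc (by decide), fun _ => h⟩
  · exact ⟨![1,1], by decide, fun _ => h, fun hc => absurd hc (by decide)⟩

lemma pickQ {P Q : Prop} (h : P ∨ Q) :
    ∃ v : Fin 2 → ZMod 2, dot2 ![0,1] v = 1 ∧ (dot2 ![1,0] v = 1 → Q) ∧ (dot2 ![1,1] v = 1 → P) := by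
  rcases h with h | h
  · exact ⟨![0,1], by decide, fun hc => absurd hc (by decide), fun _ => h⟩
  · exact ⟨![1,1], by decide, fun _ => h, fun hc => absurd hc (by decide)⟩

lemma pickR {P Q : Prop} (h : P ∨ Q) :
    ∃ v : Fin 2 → ZMod 2, dot2 ![1,1] v = 1 ∧ (dot2 ![1,0] v = 1 → P) ∧ (dot2 ![0,1] v = 1 → Q) := by
  rcases h with h | h
  · exact ⟨![1,0], by decide, fun _ => h, fun hc => absurd hc (by decide)⟩
  · exact ⟨![0,1], by decide, fun hc => absurd hc (by decide), fun _ => h⟩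

lemma code_of_config (G : Fin 5 → Fin 5 → Prop) (hG : ∀ i, ¬ G i i)
    (a b c d e : Fin 5)
    (dab : a ≠ b) (dac : a ≠ c) (dad : a ≠ d) (dae : a ≠ e)
    (dbc : b ≠ c) (dbd : b ≠ d) (dbe : b ≠ e)
    (dcd : c ≠ d) (dce : c ≠ e) (dde : d ≠ e)
    (cover : ∀ v : Fin 5, v = a ∨ v = b ∨ v = c ∨ v = d ∨ v = e)
    (Eab : G a b ∧ G b a) (Ecd : G c d ∧ G d c)
    (C1a : G e a ∨ (G c a ∧ G d a)) (C1b : G e b ∨ (G c b ∧ G d b))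
    (C2c : G e c ∨ (G a c ∧ G b c)) (C2d : G e d ∨ (G a d ∧ G b d))
    (C3 : (G a e ∧ G b e) ∨ (G c e ∧ G d e)) :
    ∃ ε : (Fin 5 → ZMod 2) → (Fin 2 → ZMod 2), IsLinearMap (ZMod 2) ε ∧ IsIndexCode G ε := by
  obtain ⟨wa, hwa1, hwa2, hwa3⟩ := pickP C1a
  obtain ⟨wb, hwb1, hwb2, hwb3⟩ := pickP C1b
  obtain ⟨wc, hwc1, hwc2, hwc3⟩ := pickQ C2c
  obtain ⟨wd, hwd1, hwd2, hwd3⟩ := pickQ C2d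
  obtain ⟨we, hwe1, hwe2, hwe3⟩ := pickR C3
  set u : Fin 5 → Fin 2 → ZMod 2 := fun v =>
    if v = a ∨ v = b then ![1,0] else if v = c ∨ v = d then ![0,1] else ![1,1] with hu
  set w : Fin 5 → Fin 2 → ZMod 2 := fun v =>
    if v = a then wa else if v = b then wb else if v = c then wc else
      if v = d then wd else we with hw
  have ua : u a = ![1,0] := by simp [hu]
  have ub : u b = ![1,0] := by simp [hu]
  have uc : u c = ![0,1] := by simp [hu, Ne.symm dac, dcd, Ne.symm dbc]
  have ud : u d = ![0,1] := by simp [hu, Ne.symm dad, Ne.symm dbd]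
  have ue : u e = ![1,1] := by simp [hu, Ne.symm dae, Ne.symm dbe, Ne.symm dce, Ne.symm dde]
  have hwa : w a = wa := by simp [hw]
  have hwb : w b = wb := by simp [hw, Ne.symm dab]
  have hwc : w c = wc := by simp [hw, Ne.symm dac, Ne.symm dbc]
  have hwd : w d = wd := by simp [hw, Ne.symm dad, Ne.symm dbd, Ne.symm dcd]
  have hwe : w e = we := by simp [hw, Ne.symm dae, Ne.symm dbe, Ne.symm dce, Ne.symm dde]
  apply code_of_vectors G hG u w
  · intro i
    rcases cover i with rfl | rfl | rfl | rfl | rfl <;>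
      simp only [ua, ub, uc, ud, ue, hwa, hwb, hwc, hwd, hwe] <;>
      first | exact hwa1 | exact hwb1 | exact hwc1 | exact hwd1 | exact hwe1
  · intro i j hij
    rcases cover i with rfl | rfl | rfl | rfl | rfl <;>
      rcases cover j with rfl | rfl | rfl | rfl | rfl <;>
      simp only [ua, ub, uc, ud, ue, hwa, hwb, hwc, hwd, hwe] <;>
      intro hdot <;>
      first
        | exact absurd rfl hij
        | exact Eab.1 | exact Eab.2 | exact Ecd.1 | exact Ecd.2
        | exact (hwa2 hdot).1 | exact (hwa2 hdot).2 | exact hwa3 hdot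
        | exact (hwb2 hdot).1 | exact (hwb2 hdot).2 | exact hwb3 hdot
        | exact (hwc2 hdot).1 | exact (hwc2 hdot).2 | exact hwc3 hdot
        | exact (hwd2 hdot).1 | exact (hwd2 hdot).2 | exact hwd3 hdot
        | exact (hwe2 hdot).1 | exact (hwe2 hdot).2 | exact (hwe3 hdot).1 | exact (hwe3 hdot).2

lemma finset_pair_eq {α : Type*} [DecidableEq α] {i j a b : α} (hij : i ≠ j)
    (h : ({i, j} : Finset α) = {a, b}) : (i = a ∧ j = b) ∨ (i = b ∧ j = a) := by
  have hi : i ∈ ({a, b} : Finset α) := h ▸ (by simp)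
  have hj : j ∈ ({a, b} : Finset α) := h ▸ (by simp)
  simp only [Finset.mem_insert, Finset.mem_singleton] at hi hj
  rcases hi with rfl | rfl <;> rcases hj with rfl | rfl <;> tauto

lemma cover5 {a b c d e : Fin 5}
    (dab : a ≠ b) (dac : a ≠ c) (dad : a ≠ d) (dae : a ≠ e)
    (dbc : b ≠ c) (dbd : b ≠ d) (dbe : b ≠ e)
    (dcd : c ≠ d) (dce : c ≠ e) (dde : d ≠ e) :
    ∀ v : Fin 5, v = a ∨ v = b ∨ v = c ∨ v = d ∨ v = e := by
  have hcard : ({a, b, c, d, e} : Finset (Fin 5)).card = 5 := by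
    rw [Finset.card_insert_of_notMem (by simp [dab, dac, dad, dae]),
        Finset.card_insert_of_notMem (by simp [dbc, dbd, dbe]),
        Finset.card_insert_of_notMem (by simp [dcd, dce]),
        Finset.card_insert_of_notMem (by simp [dde]), Finset.card_singleton]
  have huniv : ({a, b, c, d, e} : Finset (Fin 5)) = Finset.univ :=
    Finset.eq_univ_of_card _ (by simp [hcard])
  intro v
  have : v ∈ ({a, b, c, d, e} : Finset (Fin 5)) := huniv ▸ Finset.mem_univ v
  simpa using this

lemma exists_fifth (a b c d : Fin 5) : ∃ e : Fin 5, e ≠ a ∧ e ≠ b ∧ e ≠ c ∧ e ≠ d := by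
  by_contra h
  push_neg at h
  have hsub : (Finset.univ : Finset (Fin 5)) ⊆ {a, b, c, d} := by
    intro v _
    rcases eq_or_ne v a with rfl | h1; · simp
    rcases eq_or_ne v b with rfl | h2; · simp
    rcases eq_or_ne v c with rfl | h3; · simp
    rcases eq_or_ne v d with rfl | h4; · simp
    exact absurd (h v) (by tauto)
  have h5 := Finset.card_le_card hsub
  have h4 : ({a, b, c, d} : Finset (Fin 5)).card ≤ 4 := by
    apply le_trans (Finset.card_insert_le _ _)
    have h1 := Finset.card_insert_le b ({c, d} : Finset (Fin 5))
    have h2 := Finset.card_insert_le c ({d} : Finset (Fin 5))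
    have h3 : ({d} : Finset (Fin 5)).card = 1 := Finset.card_singleton d
    omega
  simp [Finset.card_univ] at h5
  omega

lemma trip (G : Fin 5 → Fin 5 → Prop) (hG : ∀ i, ¬ G i i) (hm : mais G = 2)
    (x y z : Fin 5) (dxy : x ≠ y) (dxz : x ≠ z) (dyz : y ≠ z)
    (nxy : ¬ (G x y ∧ G y x)) (nxz : ¬ (G x z ∧ G z x)) (nyz : ¬ (G y z ∧ G z y)) :
    (G x y ∧ G y z ∧ G z x) ∨ (G x z ∧ G z y ∧ G y x) := by
  set S : Finset (Fin 5) := {x, y, z} with hS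
  have hcard : S.card = 3 := by
    rw [hS, Finset.card_insert_of_notMem (by simp [dxy, dxz]),
        Finset.card_insert_of_notMem (by simp [dyz]), Finset.card_singleton]
  have hbdd : BddAbove {k : ℕ | ∃ S : Finset (Fin 5), S.card = k ∧ AcyclicOn G S} := by
    refine ⟨5, fun k hk => ?_⟩
    obtain ⟨T, hT, _⟩ := hk
    have := Finset.card_le_univ T
    simp [Finset.card_univ] at this
    omega
  have hnA : ¬ AcyclicOn G S := by
    intro hA
    have h3 : 3 ≤ mais G := le_csSup hbdd ⟨S, hcard, hA⟩
    omega
  rw [AcyclicOn] at hnA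
  push_neg at hnA
  obtain ⟨i, hcyc⟩ := hnA
  have hmem : ∀ p q : Fin 5, (G p q ∧ p ∈ S ∧ q ∈ S) →
      (p = x ∨ p = y ∨ p = z) ∧ (q = x ∨ q = y ∨ q = z) := by
    intro p q ⟨_, hp, hq⟩
    simp only [hS, Finset.mem_insert, Finset.mem_singleton] at hp hq
    exact ⟨hp, hq⟩
  have := cycle3 (fun p q => G p q ∧ p ∈ S ∧ q ∈ S) x y z hmem dxy dxz dyz
    (fun h => hG x h.1) (fun h => hG y h.1) (fun h => hG z h.1)
    (fun ⟨h1, h2⟩ => nxy ⟨h1.1, h2.1⟩) (fun ⟨h1, h2⟩ => nxz ⟨h1.1, h2.1⟩)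
    (fun ⟨h1, h2⟩ => nyz ⟨h1.1, h2.1⟩) i hcyc
  rcases this with ⟨h1, h2, h3⟩ | ⟨h1, h2, h3⟩
  · exact Or.inl ⟨h1.1, h2.1, h3.1⟩
  · exact Or.inr ⟨h1.1, h2.1, h3.1⟩


lemma tri_contra (G : Fin 5 → Fin 5 → Prop) (hnc : ∀ k : ℕ, ¬ HasUndirCycleLen G k)
    (x y z : Fin 5) (dxy : x ≠ y) (dxz : x ≠ z) (dyz : y ≠ z)
    (Exy : G x y ∧ G y x) (Eyz : G y z ∧ G z y) (Exz : G x z ∧ G z x) : False := by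
  apply hnc 3
  set v : ZMod 3 → Fin 5 := fun t => if t = 0 then x else if t = 1 then y else z with hv
  have e10 : ((1 : ZMod 3) = 0) = False := by simp
  have e20 : ((2 : ZMod 3) = 0) = False := by decide
  have e21 : ((2 : ZMod 3) = 1) = False := by decide
  have v0 : v 0 = x := by simp [hv]
  have v1 : v 1 = y := by simp [hv, e10]
  have v2 : v 2 = z := by simp [hv, e20, e21]
  have h3 : ∀ t : ZMod 3, t = 0 ∨ t = 1 ∨ t = 2 := by decide
  refine ⟨by norm_num, v, ?_, ?_⟩
  · intro s t h
    rcases h3 s with rfl | rfl | rfl <;> rcases h3 t with rfl | rfl | rfl <;>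
      simp only [v0, v1, v2] at h <;>
      first
        | rfl | exact absurd h dxy | exact absurd h dxz | exact absurd h dyz
        | exact absurd h.symm dxy | exact absurd h.symm dxz | exact absurd h.symm dyz
  · intro t
    rcases h3 t with rfl | rfl | rfl
    · rw [show (0 : ZMod 3) + 1 = 1 by decide, v0, v1]
      exact ⟨Exy.1, Exy.2⟩
    · rw [show (1 : ZMod 3) + 1 = 2 by decide, v1, v2]
      exact ⟨Eyz.1, Eyz.2⟩
    · rw [show (2 : ZMod 3) + 1 = 0 by decide, v2, v0]
      exact ⟨Exz.2, Exz.1⟩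

lemma star_contra (G : Fin 5 → Fin 5 → Prop) (hG : ∀ i, ¬ G i i) (hm : mais G = 2)
    (y1 y2 y3 z : Fin 5)
    (d12 : y1 ≠ y2) (d13 : y1 ≠ y3) (d23 : y2 ≠ y3)
    (d1z : y1 ≠ z) (d2z : y2 ≠ z) (d3z : y3 ≠ z)
    (n12 : ¬ (G y1 y2 ∧ G y2 y1)) (n13 : ¬ (G y1 y3 ∧ G y3 y1))
    (n23 : ¬ (G y2 y3 ∧ G y3 y2))
    (n1z : ¬ (G y1 z ∧ G z y1)) (n2z : ¬ (G y2 z ∧ G z y2))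
    (n3z : ¬ (G y3 z ∧ G z y3)) : False := by
  have T0 := trip G hG hm y1 y2 y3 d12 d13 d23 n12 n13 n23
  have T1 := trip G hG hm y1 y2 z d12 d1z d2z n12 n1z n2z
  have T2 := trip G hG hm y2 y3 z d23 d2z d3z n23 n2z n3z
  rcases T0 with ⟨g1, g2, g3⟩ | ⟨g1, g2, g3⟩
  · rcases T1 with ⟨h1, h2, h3⟩ | ⟨h1, h2, h3⟩
    · rcases T2 with ⟨k1, k2, k3⟩ | ⟨k1, k2, k3⟩
      · exact n2z ⟨h2, k3⟩
      · exact n23 ⟨g2, k3⟩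
    · exact n12 ⟨g1, h3⟩
  · rcases T1 with ⟨h1, h2, h3⟩ | ⟨h1, h2, h3⟩
    · exact n12 ⟨h1, g3⟩
    · rcases T2 with ⟨k1, k2, k3⟩ | ⟨k1, k2, k3⟩
      · exact n23 ⟨k1, g2⟩
      · exact n2z ⟨k1, h2⟩

lemma case_P4 (G : Fin 5 → Fin 5 → Prop) (hG : ∀ i, ¬ G i i) (hm : mais G = 2)
    (a b c d e : Fin 5)
    (dab : a ≠ b) (dac : a ≠ c) (dad : a ≠ d) (dae : a ≠ e)
    (dbc : b ≠ c) (dbd : b ≠ d) (dbe : b ≠ e)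
    (dcd : c ≠ d) (dce : c ≠ e) (dde : d ≠ e)
    (Eab : G a b ∧ G b a) (Ecd : G c d ∧ G d c) (Ebc : G b c ∧ G c b)
    (noE : ∀ i j : Fin 5, i ≠ j → G i j → G j i →
      ({i, j} : Finset (Fin 5)) = {a, b} ∨ ({i, j} : Finset (Fin 5)) = {c, d} ∨
        ({i, j} : Finset (Fin 5)) = {b, c}) :
    ∃ ε : (Fin 5 → ZMod 2) → (Fin 2 → ZMod 2), IsLinearMap (ZMod 2) ε ∧ IsIndexCode G ε := by
  have key : ∀ i j : Fin 5, i ≠ j → ({i, j} : Finset (Fin 5)) ≠ {a, b} →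
      ({i, j} : Finset (Fin 5)) ≠ {c, d} → ({i, j} : Finset (Fin 5)) ≠ {b, c} →
      ¬ (G i j ∧ G j i) := by
    rintro i j hij h1 h2 h3 ⟨g1, g2⟩
    rcases noE i j hij g1 g2 with h | h | h <;> tauto
  have nEA : ¬ (G e a ∧ G a e) := by
    apply key e a (Ne.symm dae) <;> intro h <;>
      rcases finset_pair_eq (Ne.symm dae) h with ⟨h1, h2⟩ | ⟨h1, h2⟩ <;> simp_all
  have nEC : ¬ (G e c ∧ G c e) := by
    apply key e c (Ne.symm dce) <;> intro h <;>
      rcases finset_pair_eq (Ne.symm dce) h with ⟨h1, h2⟩ | ⟨h1, h2⟩ <;> simp_all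
  have nAC : ¬ (G a c ∧ G c a) := by
    apply key a c dac <;> intro h <;>
      rcases finset_pair_eq dac h with ⟨h1, h2⟩ | ⟨h1, h2⟩ <;> simp_all
  have nED : ¬ (G e d ∧ G d e) := by
    apply key e d (Ne.symm dde) <;> intro h <;>
      rcases finset_pair_eq (Ne.symm dde) h with ⟨h1, h2⟩ | ⟨h1, h2⟩ <;> simp_all
  have nAD : ¬ (G a d ∧ G d a) := by
    apply key a d dad <;> intro h <;>
      rcases finset_pair_eq dad h with ⟨h1, h2⟩ | ⟨h1, h2⟩ <;> simp_all
  have nEB : ¬ (G e b ∧ G b e) := by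
    apply key e b (Ne.symm dbe) <;> intro h <;>
      rcases finset_pair_eq (Ne.symm dbe) h with ⟨h1, h2⟩ | ⟨h1, h2⟩ <;> simp_all
  have nBD : ¬ (G b d ∧ G d b) := by
    apply key b d dbd <;> intro h <;>
      rcases finset_pair_eq dbd h with ⟨h1, h2⟩ | ⟨h1, h2⟩ <;> simp_all
  have cover := cover5 dab dac dad dae dbc dbd dbe dcd dce dde
  have T1 := trip G hG hm e a c (Ne.symm dae) (Ne.symm dce) dac nEA nEC nAC
  have T2 := trip G hG hm e a d (Ne.symm dae) (Ne.symm dde) dad nEA nED nAD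
  have T3 := trip G hG hm e b d (Ne.symm dbe) (Ne.symm dde) dbd nEB nED nBD
  rcases T1 with ⟨h1, h2, h3⟩ | ⟨h1, h2, h3⟩
  · rcases T2 with ⟨h4, h5, h6⟩ | ⟨h4, h5, h6⟩
    · rcases T3 with ⟨h7, h8, h9⟩ | ⟨h7, h8, h9⟩
      · exact code_of_config G hG a b c d e dab dac dad dae dbc dbd dbe dcd dce dde cover
          Eab Ecd (Or.inl h1) (Or.inl h7) (Or.inr ⟨h2, Ebc.1⟩) (Or.inr ⟨h5, h8⟩)
          (Or.inr ⟨h3, h9⟩)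
      · exact absurd ⟨h7, h6⟩ nED
    · exact absurd ⟨h1, h6⟩ nEA
  · rcases T2 with ⟨h4, h5, h6⟩ | ⟨h4, h5, h6⟩
    · exact absurd ⟨h4, h3⟩ nEA
    · rcases T3 with ⟨h7, h8, h9⟩ | ⟨h7, h8, h9⟩
      · exact absurd ⟨h4, h9⟩ nED
      · exact code_of_config G hG a b c d e dab dac dad dae dbc dbd dbe dcd dce dde cover
          Eab Ecd (Or.inr ⟨h2, h5⟩) (Or.inr ⟨Ebc.2, h8⟩) (Or.inl h1) (Or.inl h4)
          (Or.inl ⟨h3, h9⟩)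

lemma case_P3K2 (G : Fin 5 → Fin 5 → Prop) (hG : ∀ i, ¬ G i i) (hm : mais G = 2)
    (a b c d e : Fin 5)
    (dab : a ≠ b) (dac : a ≠ c) (dad : a ≠ d) (dae : a ≠ e)
    (dbc : b ≠ c) (dbd : b ≠ d) (dbe : b ≠ e)
    (dcd : c ≠ d) (dce : c ≠ e) (dde : d ≠ e)
    (Eab : G a b ∧ G b a) (Ecd : G c d ∧ G d c) (Eeb : G e b ∧ G b e)
    (noE : ∀ i j : Fin 5, i ≠ j → G i j → G j i →
      ({i, j} : Finset (Fin 5)) = {a, b} ∨ ({i, j} : Finset (Fin 5)) = {c, d} ∨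
        ({i, j} : Finset (Fin 5)) = {e, b}) :
    ∃ ε : (Fin 5 → ZMod 2) → (Fin 2 → ZMod 2), IsLinearMap (ZMod 2) ε ∧ IsIndexCode G ε := by
  have key : ∀ i j : Fin 5, i ≠ j → ({i, j} : Finset (Fin 5)) ≠ {a, b} →
      ({i, j} : Finset (Fin 5)) ≠ {c, d} → ({i, j} : Finset (Fin 5)) ≠ {e, b} →
      ¬ (G i j ∧ G j i) := by
    rintro i j hij h1 h2 h3 ⟨g1, g2⟩
    rcases noE i j hij g1 g2 with h | h | h <;> tauto
  have nAC : ¬ (G a c ∧ G c a) := by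
    apply key a c dac <;> intro h <;>
      rcases finset_pair_eq dac h with ⟨h1, h2⟩ | ⟨h1, h2⟩ <;> simp_all
  have nAE : ¬ (G a e ∧ G e a) := by
    apply key a e dae <;> intro h <;>
      rcases finset_pair_eq dae h with ⟨h1, h2⟩ | ⟨h1, h2⟩ <;> simp_all
  have nCE : ¬ (G c e ∧ G e c) := by
    apply key c e dce <;> intro h <;>
      rcases finset_pair_eq dce h with ⟨h1, h2⟩ | ⟨h1, h2⟩ <;> simp_all
  have nAD : ¬ (G a d ∧ G d a) := by
    apply key a d dad <;> intro h <;>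
      rcases finset_pair_eq dad h with ⟨h1, h2⟩ | ⟨h1, h2⟩ <;> simp_all
  have nDE : ¬ (G d e ∧ G e d) := by
    apply key d e dde <;> intro h <;>
      rcases finset_pair_eq dde h with ⟨h1, h2⟩ | ⟨h1, h2⟩ <;> simp_all
  have T1 := trip G hG hm a c e dac dae dce nAC nAE nCE
  have T2 := trip G hG hm a d e dad dae dde nAD nAE nDE
  rcases T1 with ⟨h1, h2, h3⟩ | ⟨h1, h2, h3⟩
  · rcases T2 with ⟨h4, h5, h6⟩ | ⟨h4, h5, h6⟩
    · -- o1 o1 : config (c d e b a)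
      exact code_of_config G hG c d e b a dcd dce (Ne.symm dbc) (Ne.symm dac) dde
        (Ne.symm dbd) (Ne.symm dad) (Ne.symm dbe) (Ne.symm dae) (Ne.symm dab)
        (cover5 dcd dce (Ne.symm dbc) (Ne.symm dac) dde (Ne.symm dbd) (Ne.symm dad)
          (Ne.symm dbe) (Ne.symm dae) (Ne.symm dab))
        Ecd Eeb (Or.inl h1) (Or.inl h4) (Or.inr ⟨h2, h5⟩) (Or.inl Eab.1)
        (Or.inr ⟨h3, Eab.2⟩)
    · exact absurd ⟨h4, h3⟩ nAE
  · rcases T2 with ⟨h4, h5, h6⟩ | ⟨h4, h5, h6⟩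
    · exact absurd ⟨h1, h6⟩ nAE
    · -- o2 o2 : config (a b c d e)
      exact code_of_config G hG a b c d e dab dac dad dae dbc dbd dbe dcd dce dde
        (cover5 dab dac dad dae dbc dbd dbe dcd dce dde)
        Eab Ecd (Or.inr ⟨h3, h6⟩) (Or.inl Eeb.1) (Or.inl h2) (Or.inl h5)
        (Or.inl ⟨h1, Eeb.2⟩)


lemma no_len0 (G : Fin 5 → Fin 5 → Prop) (hG : ∀ i, ¬ G i i) :
    ¬ ∃ ε : (Fin 5 → ZMod 2) → (Fin 0 → ZMod 2), IsIndexCode G ε := by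
  rintro ⟨ε, h⟩
  obtain ⟨δ, hδ⟩ := h 0
  have h1 := hδ (fun _ => 0)
  have h2 := hδ (fun j => if j = 0 then 1 else 0)
  have hε : ε (fun _ => 0) = ε (fun j => if j = 0 then 1 else 0) :=
    funext fun k => k.elim0
  have hside : (fun (j : {j : Fin 5 // G 0 j}) => (fun _ : Fin 5 => (0 : ZMod 2)) j.1)
      = (fun (j : {j : Fin 5 // G 0 j}) => if j.1 = 0 then (1 : ZMod 2) else 0) := by
    funext j
    have : j.1 ≠ 0 := by
      intro hh
      have h2 := j.2
      rw [hh] at h2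
      exact hG 0 h2
    simp [this]
  rw [hε, hside] at h1
  rw [h1] at h2
  simp at h2

lemma no_len1 (G : Fin 5 → Fin 5 → Prop) (hG : ∀ i, ¬ G i i) (a b : Fin 5)
    (hab : a ≠ b) (hba : ¬ G b a) :
    ¬ ∃ ε : (Fin 5 → ZMod 2) → (Fin 1 → ZMod 2), IsIndexCode G ε := by
  rintro ⟨ε, h⟩
  obtain ⟨δa, hδa⟩ := h a
  obtain ⟨δb, hδb⟩ := h b
  set X : ZMod 2 → ZMod 2 → (Fin 5 → ZMod 2) :=
    fun s t j => if j = a then s else if j = b then t else 0 with hX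
  have g : ¬ Function.Injective (fun p : ZMod 2 × ZMod 2 => ε (X p.1 p.2)) := by
    intro hinj
    have hcard := Fintype.card_le_of_injective _ hinj
    have c1 : Fintype.card (ZMod 2 × ZMod 2) = 4 := by
      rw [Fintype.card_prod, ZMod.card 2]
    have c2 : Fintype.card (Fin 1 → ZMod 2) = 2 := by
      rw [Fintype.card_fun, ZMod.card 2]
      norm_num
    omega
  rw [Function.not_injective_iff] at g
  obtain ⟨p, q, hpq, hne⟩ := g
  have sideb : (fun (j : {j : Fin 5 // G b j}) => X p.1 p.2 j.1)
      = (fun (j : {j : Fin 5 // G b j}) => X q.1 q.2 j.1) := by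
    funext j
    have hja : j.1 ≠ a := by
      intro hh
      have h2 := j.2
      rw [hh] at h2
      exact hba h2
    have hjb : j.1 ≠ b := by
      intro hh
      have h2 := j.2
      rw [hh] at h2
      exact hG b h2
    simp [hX, hja, hjb]
  have hb1 := hδb (X p.1 p.2)
  have hb2 := hδb (X q.1 q.2)
  rw [hpq, sideb] at hb1
  have hT : p.2 = q.2 := by
    have := hb1.symm.trans hb2
    simpa [hX, Ne.symm hab] using this
  have sidea : (fun (j : {j : Fin 5 // G a j}) => X p.1 p.2 j.1)
      = (fun (j : {j : Fin 5 // G a j}) => X q.1 q.2 j.1) := by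
    funext j
    have hja : j.1 ≠ a := by
      intro hh
      have h2 := j.2
      rw [hh] at h2
      exact hG a h2
    by_cases hjb : j.1 = b
    · simp [hX, hja, hjb, hT, Ne.symm hab]
    · simp [hX, hja, hjb]
  have ha1 := hδa (X p.1 p.2)
  have ha2 := hδa (X q.1 q.2)
  rw [hpq, sidea] at ha1
  have hS : p.1 = q.1 := by
    have := ha1.symm.trans ha2
    simpa [hX] using this
  exact hne (Prod.ext hS hT)

lemma acyclic_pair (G : Fin 5 → Fin 5 → Prop) (hm : mais G = 2) :
    ∃ a b : Fin 5, a ≠ b ∧ ¬ (G a b ∧ G b a) := by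
  have hbdd : BddAbove {k : ℕ | ∃ S : Finset (Fin 5), S.card = k ∧ AcyclicOn G S} := by
    refine ⟨5, fun k hk => ?_⟩
    obtain ⟨T, hT, _⟩ := hk
    have := Finset.card_le_univ T
    simp [Finset.card_univ] at this
    omega
  have hne : {k : ℕ | ∃ S : Finset (Fin 5), S.card = k ∧ AcyclicOn G S}.Nonempty := by
    refine ⟨0, ∅, Finset.card_empty, fun i hcyc => ?_⟩
    cases hcyc with
    | single h => exact absurd h.2.1 (Finset.notMem_empty _)
    | tail _ h => exact absurd h.2.2 (Finset.notMem_empty _)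
  have h2 : 2 ∈ {k : ℕ | ∃ S : Finset (Fin 5), S.card = k ∧ AcyclicOn G S} := by
    rw [← hm]
    exact Nat.sSup_mem hne hbdd
  obtain ⟨S, hS2, hA⟩ := h2
  obtain ⟨a, b, hab, rfl⟩ := Finset.card_eq_two.mp hS2
  refine ⟨a, b, hab, fun ⟨g1, g2⟩ => ?_⟩
  exact hA a (Relation.TransGen.tail
    (Relation.TransGen.single ⟨g1, by simp, by simp⟩) ⟨g2, by simp, by simp⟩)


lemma disjoint_case (G : Fin 5 → Fin 5 → Prop) (hG : ∀ i, ¬ G i i) (hm : mais G = 2)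
    (a1 b1 a2 b2 a3 b3 : Fin 5)
    (d1 : a1 ≠ b1) (d2 : a2 ≠ b2) (d3 : a3 ≠ b3)
    (m1 : a1 ≠ a2) (m2 : a1 ≠ b2) (m3 : b1 ≠ a2) (m4 : b1 ≠ b2)
    (g1 : G a1 b1) (g1' : G b1 a1) (g2 : G a2 b2) (g2' : G b2 a2)
    (g3 : G a3 b3) (g3' : G b3 a3)
    (h13 : ({a1, b1} : Finset (Fin 5)) ≠ {a3, b3})
    (h23 : ({a2, b2} : Finset (Fin 5)) ≠ {a3, b3})
    (noE : ∀ i j : Fin 5, i ≠ j → G i j → G j i →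
      ({i, j} : Finset (Fin 5)) = {a1, b1} ∨ ({i, j} : Finset (Fin 5)) = {a2, b2} ∨
        ({i, j} : Finset (Fin 5)) = {a3, b3}) :
    ∃ ε : (Fin 5 → ZMod 2) → (Fin 2 → ZMod 2), IsLinearMap (ZMod 2) ε ∧ IsIndexCode G ε := by
  obtain ⟨e, he1, he2, he3, he4⟩ := exists_fifth a1 b1 a2 b2
  have cov := cover5 d1 m1 m2 (Ne.symm he1) m3 m4 (Ne.symm he2) d2 (Ne.symm he3) (Ne.symm he4)
  rcases cov a3 with ha | ha | ha | ha | ha <;> rcases cov b3 with hb | hb | hb | hb | hb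
  · rw [ha, hb] at d3 g3 g3' h13 h23 noE
    exact absurd rfl d3
  · rw [ha, hb] at d3 g3 g3' h13 h23 noE
    exact absurd rfl h13
  · rw [ha, hb] at d3 g3 g3' h13 h23 noE
    exact case_P4 G hG hm b1 a1 a2 b2 e (Ne.symm d1) m3 m4 (Ne.symm he2) m1 m2 (Ne.symm he1) d2 (Ne.symm he3) (Ne.symm he4)
            ⟨g1', g1⟩ ⟨g2, g2'⟩ ⟨g3, g3'⟩
            (fun i j hij u v => match noE i j hij u v with | Or.inl h => Or.inl (h.trans (Finset.pair_comm a1 b1)) | Or.inr (Or.inl h) => Or.inr (Or.inl h) | Or.inr (Or.inr h) => Or.inr (Or.inr h))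
  · rw [ha, hb] at d3 g3 g3' h13 h23 noE
    exact case_P4 G hG hm b1 a1 b2 a2 e (Ne.symm d1) m4 m3 (Ne.symm he2) m2 m1 (Ne.symm he1) (Ne.symm d2) (Ne.symm he4) (Ne.symm he3)
            ⟨g1', g1⟩ ⟨g2', g2⟩ ⟨g3, g3'⟩
            (fun i j hij u v => match noE i j hij u v with | Or.inl h => Or.inl (h.trans (Finset.pair_comm a1 b1)) | Or.inr (Or.inl h) => Or.inr (Or.inl (h.trans (Finset.pair_comm a2 b2))) | Or.inr (Or.inr h) => Or.inr (Or.inr h))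
  · rw [ha, hb] at d3 g3 g3' h13 h23 noE
    exact case_P3K2 G hG hm b1 a1 a2 b2 e (Ne.symm d1) m3 m4 (Ne.symm he2) m1 m2 (Ne.symm he1) d2 (Ne.symm he3) (Ne.symm he4)
            ⟨g1', g1⟩ ⟨g2, g2'⟩ ⟨g3', g3⟩
            (fun i j hij u v => match noE i j hij u v with | Or.inl h => Or.inl (h.trans (Finset.pair_comm a1 b1)) | Or.inr (Or.inl h) => Or.inr (Or.inl h) | Or.inr (Or.inr h) => Or.inr (Or.inr (h.trans (Finset.pair_comm a1 e))))
  · rw [ha, hb] at d3 g3 g3' h13 h23 noE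
    exact absurd (Finset.pair_comm a1 b1) h13
  · rw [ha, hb] at d3 g3 g3' h13 h23 noE
    exact absurd rfl d3
  · rw [ha, hb] at d3 g3 g3' h13 h23 noE
    exact case_P4 G hG hm a1 b1 a2 b2 e d1 m1 m2 (Ne.symm he1) m3 m4 (Ne.symm he2) d2 (Ne.symm he3) (Ne.symm he4)
            ⟨g1, g1'⟩ ⟨g2, g2'⟩ ⟨g3, g3'⟩
            (fun i j hij u v => match noE i j hij u v with | Or.inl h => Or.inl h | Or.inr (Or.inl h) => Or.inr (Or.inl h) | Or.inr (Or.inr h) => Or.inr (Or.inr h))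
  · rw [ha, hb] at d3 g3 g3' h13 h23 noE
    exact case_P4 G hG hm a1 b1 b2 a2 e d1 m2 m1 (Ne.symm he1) m4 m3 (Ne.symm he2) (Ne.symm d2) (Ne.symm he4) (Ne.symm he3)
            ⟨g1, g1'⟩ ⟨g2', g2⟩ ⟨g3, g3'⟩
            (fun i j hij u v => match noE i j hij u v with | Or.inl h => Or.inl h | Or.inr (Or.inl h) => Or.inr (Or.inl (h.trans (Finset.pair_comm a2 b2))) | Or.inr (Or.inr h) => Or.inr (Or.inr h))
  · rw [ha, hb] at d3 g3 g3' h13 h23 noE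
    exact case_P3K2 G hG hm a1 b1 a2 b2 e d1 m1 m2 (Ne.symm he1) m3 m4 (Ne.symm he2) d2 (Ne.symm he3) (Ne.symm he4)
            ⟨g1, g1'⟩ ⟨g2, g2'⟩ ⟨g3', g3⟩
            (fun i j hij u v => match noE i j hij u v with | Or.inl h => Or.inl h | Or.inr (Or.inl h) => Or.inr (Or.inl h) | Or.inr (Or.inr h) => Or.inr (Or.inr (h.trans (Finset.pair_comm b1 e))))
  · rw [ha, hb] at d3 g3 g3' h13 h23 noE
    exact case_P4 G hG hm b2 a2 a1 b1 e (Ne.symm d2) (Ne.symm m2) (Ne.symm m4) (Ne.symm he4) (Ne.symm m1) (Ne.symm m3) (Ne.symm he3) d1 (Ne.symm he1) (Ne.symm he2)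
            ⟨g2', g2⟩ ⟨g1, g1'⟩ ⟨g3, g3'⟩
            (fun i j hij u v => match noE i j hij u v with | Or.inl h => Or.inr (Or.inl h) | Or.inr (Or.inl h) => Or.inl (h.trans (Finset.pair_comm a2 b2)) | Or.inr (Or.inr h) => Or.inr (Or.inr h))
  · rw [ha, hb] at d3 g3 g3' h13 h23 noE
    exact case_P4 G hG hm b2 a2 b1 a1 e (Ne.symm d2) (Ne.symm m4) (Ne.symm m2) (Ne.symm he4) (Ne.symm m3) (Ne.symm m1) (Ne.symm he3) (Ne.symm d1) (Ne.symm he2) (Ne.symm he1)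
            ⟨g2', g2⟩ ⟨g1', g1⟩ ⟨g3, g3'⟩
            (fun i j hij u v => match noE i j hij u v with | Or.inl h => Or.inr (Or.inl (h.trans (Finset.pair_comm a1 b1))) | Or.inr (Or.inl h) => Or.inl (h.trans (Finset.pair_comm a2 b2)) | Or.inr (Or.inr h) => Or.inr (Or.inr h))
  · rw [ha, hb] at d3 g3 g3' h13 h23 noE
    exact absurd rfl d3
  · rw [ha, hb] at d3 g3 g3' h13 h23 noE
    exact absurd rfl h23
  · rw [ha, hb] at d3 g3 g3' h13 h23 noE
    exact case_P3K2 G hG hm b2 a2 a1 b1 e (Ne.symm d2) (Ne.symm m2) (Ne.symm m4) (Ne.symm he4) (Ne.symm m1) (Ne.symm m3) (Ne.symm he3) d1 (Ne.symm he1) (Ne.symm he2)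
            ⟨g2', g2⟩ ⟨g1, g1'⟩ ⟨g3', g3⟩
            (fun i j hij u v => match noE i j hij u v with | Or.inl h => Or.inr (Or.inl h) | Or.inr (Or.inl h) => Or.inl (h.trans (Finset.pair_comm a2 b2)) | Or.inr (Or.inr h) => Or.inr (Or.inr (h.trans (Finset.pair_comm a2 e))))
  · rw [ha, hb] at d3 g3 g3' h13 h23 noE
    exact case_P4 G hG hm a2 b2 a1 b1 e d2 (Ne.symm m1) (Ne.symm m3) (Ne.symm he3) (Ne.symm m2) (Ne.symm m4) (Ne.symm he4) d1 (Ne.symm he1) (Ne.symm he2)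
            ⟨g2, g2'⟩ ⟨g1, g1'⟩ ⟨g3, g3'⟩
            (fun i j hij u v => match noE i j hij u v with | Or.inl h => Or.inr (Or.inl h) | Or.inr (Or.inl h) => Or.inl h | Or.inr (Or.inr h) => Or.inr (Or.inr h))
  · rw [ha, hb] at d3 g3 g3' h13 h23 noE
    exact case_P4 G hG hm a2 b2 b1 a1 e d2 (Ne.symm m3) (Ne.symm m1) (Ne.symm he3) (Ne.symm m4) (Ne.symm m2) (Ne.symm he4) (Ne.symm d1) (Ne.symm he2) (Ne.symm he1)
            ⟨g2, g2'⟩ ⟨g1', g1⟩ ⟨g3, g3'⟩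
            (fun i j hij u v => match noE i j hij u v with | Or.inl h => Or.inr (Or.inl (h.trans (Finset.pair_comm a1 b1))) | Or.inr (Or.inl h) => Or.inl h | Or.inr (Or.inr h) => Or.inr (Or.inr h))
  · rw [ha, hb] at d3 g3 g3' h13 h23 noE
    exact absurd (Finset.pair_comm a2 b2) h23
  · rw [ha, hb] at d3 g3 g3' h13 h23 noE
    exact absurd rfl d3
  · rw [ha, hb] at d3 g3 g3' h13 h23 noE
    exact case_P3K2 G hG hm a2 b2 a1 b1 e d2 (Ne.symm m1) (Ne.symm m3) (Ne.symm he3) (Ne.symm m2) (Ne.symm m4) (Ne.symm he4) d1 (Ne.symm he1) (Ne.symm he2)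
            ⟨g2, g2'⟩ ⟨g1, g1'⟩ ⟨g3', g3⟩
            (fun i j hij u v => match noE i j hij u v with | Or.inl h => Or.inr (Or.inl h) | Or.inr (Or.inl h) => Or.inl h | Or.inr (Or.inr h) => Or.inr (Or.inr (h.trans (Finset.pair_comm b2 e))))
  · rw [ha, hb] at d3 g3 g3' h13 h23 noE
    exact case_P3K2 G hG hm b1 a1 a2 b2 e (Ne.symm d1) m3 m4 (Ne.symm he2) m1 m2 (Ne.symm he1) d2 (Ne.symm he3) (Ne.symm he4)
            ⟨g1', g1⟩ ⟨g2, g2'⟩ ⟨g3, g3'⟩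
            (fun i j hij u v => match noE i j hij u v with | Or.inl h => Or.inl (h.trans (Finset.pair_comm a1 b1)) | Or.inr (Or.inl h) => Or.inr (Or.inl h) | Or.inr (Or.inr h) => Or.inr (Or.inr h))
  · rw [ha, hb] at d3 g3 g3' h13 h23 noE
    exact case_P3K2 G hG hm a1 b1 a2 b2 e d1 m1 m2 (Ne.symm he1) m3 m4 (Ne.symm he2) d2 (Ne.symm he3) (Ne.symm he4)
            ⟨g1, g1'⟩ ⟨g2, g2'⟩ ⟨g3, g3'⟩
            (fun i j hij u v => match noE i j hij u v with | Or.inl h => Or.inl h | Or.inr (Or.inl h) => Or.inr (Or.inl h) | Or.inr (Or.inr h) => Or.inr (Or.inr h))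
  · rw [ha, hb] at d3 g3 g3' h13 h23 noE
    exact case_P3K2 G hG hm b2 a2 a1 b1 e (Ne.symm d2) (Ne.symm m2) (Ne.symm m4) (Ne.symm he4) (Ne.symm m1) (Ne.symm m3) (Ne.symm he3) d1 (Ne.symm he1) (Ne.symm he2)
            ⟨g2', g2⟩ ⟨g1, g1'⟩ ⟨g3, g3'⟩
            (fun i j hij u v => match noE i j hij u v with | Or.inl h => Or.inr (Or.inl h) | Or.inr (Or.inl h) => Or.inl (h.trans (Finset.pair_comm a2 b2)) | Or.inr (Or.inr h) => Or.inr (Or.inr h))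
  · rw [ha, hb] at d3 g3 g3' h13 h23 noE
    exact case_P3K2 G hG hm a2 b2 a1 b1 e d2 (Ne.symm m1) (Ne.symm m3) (Ne.symm he3) (Ne.symm m2) (Ne.symm m4) (Ne.symm he4) d1 (Ne.symm he1) (Ne.symm he2)
            ⟨g2, g2'⟩ ⟨g1, g1'⟩ ⟨g3, g3'⟩
            (fun i j hij u v => match noE i j hij u v with | Or.inl h => Or.inr (Or.inl h) | Or.inr (Or.inl h) => Or.inl h | Or.inr (Or.inr h) => Or.inr (Or.inr h))
  · rw [ha, hb] at d3 g3 g3' h13 h23 noE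
    exact absurd rfl d3


lemma share_case (G : Fin 5 → Fin 5 → Prop) (hG : ∀ i, ¬ G i i) (hm : mais G = 2)
    (hnc : ∀ k : ℕ, ¬ HasUndirCycleLen G k)
    (x y z a3 b3 : Fin 5)
    (dxy : x ≠ y) (dxz : x ≠ z) (dyz : y ≠ z) (d3 : a3 ≠ b3)
    (g1 : G x y) (g1' : G y x) (g2 : G x z) (g2' : G z x)
    (g3 : G a3 b3) (g3' : G b3 a3)
    (h13 : ({x, y} : Finset (Fin 5)) ≠ {a3, b3})
    (h23 : ({x, z} : Finset (Fin 5)) ≠ {a3, b3})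
    (noE : ∀ i j : Fin 5, i ≠ j → G i j → G j i →
      ({i, j} : Finset (Fin 5)) = {x, y} ∨ ({i, j} : Finset (Fin 5)) = {x, z} ∨
        ({i, j} : Finset (Fin 5)) = {a3, b3}) :
    ∃ ε : (Fin 5 → ZMod 2) → (Fin 2 → ZMod 2), IsLinearMap (ZMod 2) ε ∧ IsIndexCode G ε := by
  by_cases hax : a3 = x
  · rw [hax] at d3 g3 g3' h13 h23 noE
    by_cases hbx : b3 = x
    · rw [hbx] at d3; exact absurd rfl d3
    · by_cases hby : b3 = y
      · rw [hby] at h13; exact absurd rfl h13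
      · by_cases hbz : b3 = z
        · rw [hbz] at h23; exact absurd rfl h23
        · obtain ⟨v5, hv1, hv2, hv3, hv4⟩ := exists_fifth x y z b3
          have nYZ : ¬ (G y z ∧ G z y) := by
            rintro ⟨u1, u2⟩
            rcases noE y z dyz u1 u2 with h | h | h <;>
              rcases finset_pair_eq dyz h with ⟨e1, e2⟩ | ⟨e1, e2⟩ <;> simp_all
          have nYW : ¬ (G y b3 ∧ G b3 y) := by
            rintro ⟨u1, u2⟩
            rcases noE y b3 (Ne.symm hby) u1 u2 with h | h | h <;>
              rcases finset_pair_eq (Ne.symm hby) h with ⟨e1, e2⟩ | ⟨e1, e2⟩ <;> simp_all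
          have nZW : ¬ (G z b3 ∧ G b3 z) := by
            rintro ⟨u1, u2⟩
            rcases noE z b3 (Ne.symm hbz) u1 u2 with h | h | h <;>
              rcases finset_pair_eq (Ne.symm hbz) h with ⟨e1, e2⟩ | ⟨e1, e2⟩ <;> simp_all
          have nYV : ¬ (G y v5 ∧ G v5 y) := by
            rintro ⟨u1, u2⟩
            rcases noE y v5 (Ne.symm hv2) u1 u2 with h | h | h <;>
              rcases finset_pair_eq (Ne.symm hv2) h with ⟨e1, e2⟩ | ⟨e1, e2⟩ <;> simp_all
          have nZV : ¬ (G z v5 ∧ G v5 z) := by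
            rintro ⟨u1, u2⟩
            rcases noE z v5 (Ne.symm hv3) u1 u2 with h | h | h <;>
              rcases finset_pair_eq (Ne.symm hv3) h with ⟨e1, e2⟩ | ⟨e1, e2⟩ <;> simp_all
          have nWV : ¬ (G b3 v5 ∧ G v5 b3) := by
            rintro ⟨u1, u2⟩
            rcases noE b3 v5 (Ne.symm hv4) u1 u2 with h | h | h <;>
              rcases finset_pair_eq (Ne.symm hv4) h with ⟨e1, e2⟩ | ⟨e1, e2⟩ <;> simp_all
          exact (star_contra G hG hm y z b3 v5 dyz (Ne.symm hby) (Ne.symm hbz)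
            (Ne.symm hv2) (Ne.symm hv3) (Ne.symm hv4) nYZ nYW nZW nYV nZV nWV).elim
  · by_cases hay : a3 = y
    · rw [hay] at d3 g3 g3' h13 h23 noE
      by_cases hbx : b3 = x
      · rw [hbx] at h13; exact absurd (Finset.pair_comm x y) h13
      · by_cases hby : b3 = y
        · rw [hby] at d3; exact absurd rfl d3
        · by_cases hbz : b3 = z
          · rw [hbz] at g3 g3'
            exact (tri_contra G hnc x y z dxy dxz dyz ⟨g1, g1'⟩ ⟨g3, g3'⟩ ⟨g2, g2'⟩).elim
          · obtain ⟨v5, hv1, hv2, hv3, hv4⟩ := exists_fifth x y z b3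
            exact case_P4 G hG hm z x y b3 v5 (Ne.symm dxz) (Ne.symm dyz) (Ne.symm hbz)
              (Ne.symm hv3) dxy (Ne.symm hbx) (Ne.symm hv1) (Ne.symm hby) (Ne.symm hv2)
              (Ne.symm hv4) ⟨g2', g2⟩ ⟨g3, g3'⟩ ⟨g1, g1'⟩
              (fun i j hij gij gji => match noE i j hij gij gji with
                | Or.inl h => Or.inr (Or.inr h)
                | Or.inr (Or.inl h) => Or.inl (h.trans (Finset.pair_comm x z))
                | Or.inr (Or.inr h) => Or.inr (Or.inl h))
    · by_cases haz : a3 = z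
      · rw [haz] at d3 g3 g3' h13 h23 noE
        by_cases hbx : b3 = x
        · rw [hbx] at h23; exact absurd (Finset.pair_comm x z) h23
        · by_cases hby : b3 = y
          · rw [hby] at g3 g3'
            exact (tri_contra G hnc x y z dxy dxz dyz ⟨g1, g1'⟩ ⟨g3', g3⟩ ⟨g2, g2'⟩).elim
          · by_cases hbz : b3 = z
            · rw [hbz] at d3; exact absurd rfl d3
            · obtain ⟨v5, hv1, hv2, hv3, hv4⟩ := exists_fifth x y z b3
              exact case_P4 G hG hm y x z b3 v5 (Ne.symm dxy) dyz (Ne.symm hby)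
                (Ne.symm hv2) dxz (Ne.symm hbx) (Ne.symm hv1) (Ne.symm hbz) (Ne.symm hv3)
                (Ne.symm hv4) ⟨g1', g1⟩ ⟨g3, g3'⟩ ⟨g2, g2'⟩
                (fun i j hij gij gji => match noE i j hij gij gji with
                  | Or.inl h => Or.inl (h.trans (Finset.pair_comm x y))
                  | Or.inr (Or.inl h) => Or.inr (Or.inr h)
                  | Or.inr (Or.inr h) => Or.inr (Or.inl h))
      · -- a3 is a new vertex
        by_cases hbx : b3 = x
        · rw [hbx] at d3 g3 g3' h13 h23 noE
          obtain ⟨v5, hv1, hv2, hv3, hv4⟩ := exists_fifth x y z a3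
          have nYZ : ¬ (G y z ∧ G z y) := by
            rintro ⟨u1, u2⟩
            rcases noE y z dyz u1 u2 with h | h | h <;>
              rcases finset_pair_eq dyz h with ⟨e1, e2⟩ | ⟨e1, e2⟩ <;> simp_all
          have nYW : ¬ (G y a3 ∧ G a3 y) := by
            rintro ⟨u1, u2⟩
            rcases noE y a3 (Ne.symm hay) u1 u2 with h | h | h <;>
              rcases finset_pair_eq (Ne.symm hay) h with ⟨e1, e2⟩ | ⟨e1, e2⟩ <;> simp_all
          have nZW : ¬ (G z a3 ∧ G a3 z) := by
            rintro ⟨u1, u2⟩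
            rcases noE z a3 (Ne.symm haz) u1 u2 with h | h | h <;>
              rcases finset_pair_eq (Ne.symm haz) h with ⟨e1, e2⟩ | ⟨e1, e2⟩ <;> simp_all
          have nYV : ¬ (G y v5 ∧ G v5 y) := by
            rintro ⟨u1, u2⟩
            rcases noE y v5 (Ne.symm hv2) u1 u2 with h | h | h <;>
              rcases finset_pair_eq (Ne.symm hv2) h with ⟨e1, e2⟩ | ⟨e1, e2⟩ <;> simp_all
          have nZV : ¬ (G z v5 ∧ G v5 z) := by
            rintro ⟨u1, u2⟩
            rcases noE z v5 (Ne.symm hv3) u1 u2 with h | h | h <;>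
              rcases finset_pair_eq (Ne.symm hv3) h with ⟨e1, e2⟩ | ⟨e1, e2⟩ <;> simp_all
          have nWV : ¬ (G a3 v5 ∧ G v5 a3) := by
            rintro ⟨u1, u2⟩
            rcases noE a3 v5 (Ne.symm hv4) u1 u2 with h | h | h <;>
              rcases finset_pair_eq (Ne.symm hv4) h with ⟨e1, e2⟩ | ⟨e1, e2⟩ <;> simp_all
          exact (star_contra G hG hm y z a3 v5 dyz (Ne.symm hay) (Ne.symm haz)
            (Ne.symm hv2) (Ne.symm hv3) (Ne.symm hv4) nYZ nYW nZW nYV nZV nWV).elim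
        · by_cases hby : b3 = y
          · rw [hby] at d3 g3 g3' h13 h23 noE
            obtain ⟨v5, hv1, hv2, hv3, hv4⟩ := exists_fifth x y z a3
            exact case_P4 G hG hm z x y a3 v5 (Ne.symm dxz) (Ne.symm dyz) (Ne.symm haz)
              (Ne.symm hv3) dxy (Ne.symm hax) (Ne.symm hv1) (Ne.symm hay) (Ne.symm hv2)
              (Ne.symm hv4) ⟨g2', g2⟩ ⟨g3', g3⟩ ⟨g1, g1'⟩
              (fun i j hij gij gji => match noE i j hij gij gji with
                | Or.inl h => Or.inr (Or.inr h)
                | Or.inr (Or.inl h) => Or.inl (h.trans (Finset.pair_comm x z))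
                | Or.inr (Or.inr h) => Or.inr (Or.inl (h.trans (Finset.pair_comm a3 y))))
          · by_cases hbz : b3 = z
            · rw [hbz] at d3 g3 g3' h13 h23 noE
              obtain ⟨v5, hv1, hv2, hv3, hv4⟩ := exists_fifth x y z a3
              exact case_P4 G hG hm y x z a3 v5 (Ne.symm dxy) dyz (Ne.symm hay)
                (Ne.symm hv2) dxz (Ne.symm hax) (Ne.symm hv1) (Ne.symm haz) (Ne.symm hv3)
                (Ne.symm hv4) ⟨g1', g1⟩ ⟨g3', g3⟩ ⟨g2, g2'⟩
                (fun i j hij gij gji => match noE i j hij gij gji with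
                  | Or.inl h => Or.inl (h.trans (Finset.pair_comm x y))
                  | Or.inr (Or.inl h) => Or.inr (Or.inr h)
                  | Or.inr (Or.inr h) => Or.inr (Or.inl (h.trans (Finset.pair_comm a3 z))))
            · exact case_P3K2 G hG hm y x a3 b3 z (Ne.symm dxy) (Ne.symm hay)
                (Ne.symm hby) dyz (Ne.symm hax) (Ne.symm hbx) dxz d3 haz hbz
                ⟨g1', g1⟩ ⟨g3, g3'⟩ ⟨g2', g2⟩
                (fun i j hij gij gji => match noE i j hij gij gji with
                  | Or.inl h => Or.inl (h.trans (Finset.pair_comm x y))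
                  | Or.inr (Or.inl h) => Or.inr (Or.inr (h.trans (Finset.pair_comm x z)))
                  | Or.inr (Or.inr h) => Or.inr (Or.inl h))

/-- Five vertices, `mais G = 2`, exactly three edges, and no undirected cycle:
then `ℓ*(G) = 2`, achieved by a linear index code over `GF(2)`. -/
theorem stmt19 (G : Fin 5 → Fin 5 → Prop) (hG : ∀ i, ¬ G i i) (hm : mais G = 2)
    (he : (edgeSet G).ncard = 3) (hnc : ∀ k : ℕ, ¬ HasUndirCycleLen G k) :
    optLen G = 2 ∧
    ∃ ε : (Fin 5 → ZMod 2) → (Fin 2 → ZMod 2),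
      IsLinearMap (ZMod 2) ε ∧ IsIndexCode G ε := by
  rw [Set.ncard_eq_three] at he
  obtain ⟨E1, E2, E3, h12, h13, h23, hset⟩ := he
  have mE1 : E1 ∈ edgeSet G := by rw [hset]; simp
  have mE2 : E2 ∈ edgeSet G := by rw [hset]; simp
  have mE3 : E3 ∈ edgeSet G := by rw [hset]; simp
  obtain ⟨a1, b1, d1, g1, g1', hE1⟩ := mE1
  obtain ⟨a2, b2, d2, g2, g2', hE2⟩ := mE2
  obtain ⟨a3, b3, d3, g3, g3', hE3⟩ := mE3
  subst hE1; subst hE2; subst hE3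
  have noE : ∀ i j : Fin 5, i ≠ j → G i j → G j i →
      ({i, j} : Finset (Fin 5)) = {a1, b1} ∨ ({i, j} : Finset (Fin 5)) = {a2, b2} ∨
        ({i, j} : Finset (Fin 5)) = {a3, b3} := by
    intro i j hij gij gji
    have : ({i, j} : Finset (Fin 5)) ∈ edgeSet G := ⟨i, j, hij, gij, gji, rfl⟩
    rw [hset] at this
    simpa using this
  have hup : ∃ ε : (Fin 5 → ZMod 2) → (Fin 2 → ZMod 2),
      IsLinearMap (ZMod 2) ε ∧ IsIndexCode G ε := by
    by_cases hs : a2 = a1 ∨ a2 = b1 ∨ b2 = a1 ∨ b2 = b1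
    · rcases hs with h | h | h | h
      · rw [h] at d2 g2 g2' h12 h23 noE
        have dyz : b1 ≠ b2 := by intro hh; rw [hh] at h12; exact h12 rfl
        exact share_case G hG hm hnc a1 b1 b2 a3 b3 d1 d2 dyz d3 g1 g1' g2 g2' g3 g3'
          h13 h23 noE
      · rw [h] at d2 g2 g2' h12 h23 noE
        have dyz : a1 ≠ b2 := by
          intro hh; rw [hh] at h12; exact h12 (Finset.pair_comm b2 b1)
        exact share_case G hG hm hnc b1 a1 b2 a3 b3 (Ne.symm d1) d2 dyz d3 g1' g1 g2 g2'
          g3 g3' (by rw [Finset.pair_comm b1 a1]; exact h13) h23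
          (fun i j hij gij gji => match noE i j hij gij gji with
            | Or.inl h' => Or.inl (h'.trans (Finset.pair_comm a1 b1))
            | Or.inr (Or.inl h') => Or.inr (Or.inl h')
            | Or.inr (Or.inr h') => Or.inr (Or.inr h'))
      · rw [h] at d2 g2 g2' h12 h23 noE
        have dyz : b1 ≠ a2 := by
          intro hh; rw [hh] at h12; exact h12 (Finset.pair_comm a1 a2)
        exact share_case G hG hm hnc a1 b1 a2 a3 b3 d1 (Ne.symm d2) dyz d3 g1 g1' g2' g2
          g3 g3' h13 (by rw [Finset.pair_comm a1 a2]; exact h23)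
          (fun i j hij gij gji => match noE i j hij gij gji with
            | Or.inl h' => Or.inl h'
            | Or.inr (Or.inl h') => Or.inr (Or.inl (h'.trans (Finset.pair_comm a2 a1)))
            | Or.inr (Or.inr h') => Or.inr (Or.inr h'))
      · rw [h] at d2 g2 g2' h12 h23 noE
        have dyz : a1 ≠ a2 := by
          intro hh; rw [hh] at h12; exact h12 rfl
        exact share_case G hG hm hnc b1 a1 a2 a3 b3 (Ne.symm d1) (Ne.symm d2) dyz d3
          g1' g1 g2' g2 g3 g3' (by rw [Finset.pair_comm b1 a1]; exact h13)
          (by rw [Finset.pair_comm b1 a2]; exact h23)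
          (fun i j hij gij gji => match noE i j hij gij gji with
            | Or.inl h' => Or.inl (h'.trans (Finset.pair_comm a1 b1))
            | Or.inr (Or.inl h') => Or.inr (Or.inl (h'.trans (Finset.pair_comm a2 b1)))
            | Or.inr (Or.inr h') => Or.inr (Or.inr h'))
    · push_neg at hs
      obtain ⟨n1, n2, n3, n4⟩ := hs
      exact disjoint_case G hG hm a1 b1 a2 b2 a3 b3 d1 d2 d3 (Ne.symm n1) (Ne.symm n3)
        (Ne.symm n2) (Ne.symm n4) g1 g1' g2 g2' g3 g3' h13 h23 noE
  obtain ⟨ε, hlin, hcode⟩ := hup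
  refine ⟨?_, ε, hlin, hcode⟩
  have h2mem : 2 ∈ {ℓ : ℕ | ∃ ε : (Fin 5 → ZMod 2) → (Fin ℓ → ZMod 2), IsIndexCode G ε} :=
    ⟨ε, hcode⟩
  have h0 : 0 ∉ {ℓ : ℕ | ∃ ε : (Fin 5 → ZMod 2) → (Fin ℓ → ZMod 2), IsIndexCode G ε} :=
    no_len0 G hG
  have h1 : 1 ∉ {ℓ : ℕ | ∃ ε : (Fin 5 → ZMod 2) → (Fin ℓ → ZMod 2), IsIndexCode G ε} := by
    obtain ⟨a, b, hab, hnab⟩ := acyclic_pair G hm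
    rw [not_and_or] at hnab
    rcases hnab with hn | hn
    · exact no_len1 G hG b a (Ne.symm hab) hn
    · exact no_len1 G hG a b hab hn
  have hle := Nat.sInf_le h2mem
  have hmemInf := Nat.sInf_mem (⟨2, h2mem⟩ : Set.Nonempty _)
  unfold optLen
  have hcases : sInf {ℓ : ℕ | ∃ ε : (Fin 5 → ZMod 2) → (Fin ℓ → ZMod 2), IsIndexCode G ε} = 0 ∨
      sInf {ℓ : ℕ | ∃ ε : (Fin 5 → ZMod 2) → (Fin ℓ → ZMod 2), IsIndexCode G ε} = 1 ∨
      sInf {ℓ : ℕ | ∃ ε : (Fin 5 → ZMod 2) → (Fin ℓ → ZMod 2), IsIndexCode G ε} = 2 := by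
    omega
  rcases hcases with h | h | h
  · rw [h] at hmemInf; exact absurd hmemInf h0
  · rw [h] at hmemInf; exact absurd hmemInf h1
  · exact h
end
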